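/- arXiv:2511.06321 — 3 statements merged into one kernel-verified Lean document; each statement's English description precedes it below -/
import Mathlib

section
/- Let β ∈ (0,1) and let w, z ≥ 0 with w^β + z > 0. Then 1/(w^β + z) = (sin(πβ)/π) · ∫₀^∞ 1/(s^β (w+s) σ_β(s,z)) ds, where σ_β(s,z) = 1 + s^{-2β} z² + 2 z s^{-β} cos(πβ). -/
open Real MeasureTheory

noncomputable section SpectralProof

namespace SpectralProof

open Complex Set Filter intervalIntegral

/-- the complex modulus as an absolute value -/
def Complex.abs : AbsoluteValue ℂ ℝ where
  toFun := fun z => ‖z‖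
  map_mul' := norm_mul
  nonneg' := norm_nonneg
  eq_zero' := fun _ => norm_eq_zero
  add_le' := norm_add_le

lemma Complex.abs_apply (z : ℂ) : Complex.abs z = ‖z‖ := rfl

lemma Complex.norm_eq_abs (z : ℂ) : ‖z‖ = Complex.abs z := rfl

lemma Complex.abs_exp (z : ℂ) : Complex.abs (Complex.exp z) = Real.exp z.re :=
  _root_.Complex.norm_exp z

@[simp]
lemma Complex.abs_ofReal (r : ℝ) : Complex.abs (r : ℂ) = |r| := by
  show ‖(r:ℂ)‖ = |r|
  simp

lemma Complex.sq_abs (z : ℂ) : Complex.abs z ^ 2 = Complex.normSq z :=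
  _root_.Complex.sq_norm z

lemma Complex.abs.pos {z : ℂ} (hz : z ≠ 0) : 0 < Complex.abs z :=
  norm_pos_iff.2 hz

/-- `Q t = t^(2β) + 2 z cos(πβ) t^β + z²`. -/
def Q (β z t : ℝ) : ℝ := t ^ (2*β) + 2*z*Real.cos (π*β)*t^β + z^2

/-- the real integrand -/
def f (β w z t : ℝ) : ℝ := t ^ β / ((w+t) * Q β z t)

/-- integrand in log coordinates -/
def g (β w z x : ℝ) : ℝ := Real.exp x * f β w z (Real.exp x)

/-- the complex contour function -/
def G (β w z : ℝ) (ξ : ℂ) : ℂ :=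
  (if w = 0 then Complex.exp (β*ξ) / Complex.exp ξ
   else dslope (fun ζ => Complex.exp (β*ζ)) (Real.log w) ξ / dslope Complex.exp (Real.log w) ξ)
  * (Complex.exp ξ / (Complex.exp (β*ξ) + z))

lemma Spos {β : ℝ} (hβ0 : 0 < β) (hβ1 : β < 1) : 0 < Real.sin (π*β) := by
  apply Real.sin_pos_of_pos_of_lt_pi
  · positivity
  · nlinarith [Real.pi_pos]

/-- key quadratic bound, real version -/
lemma quad_bound {β z : ℝ} (hz : 0 ≤ z) {r : ℝ} (hr : 0 ≤ r) {γ : ℝ} (hγ : Real.cos (π*β) ≤ γ) :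
    Real.sin (π*β)^2 * r^2 ≤ r^2 + 2*z*γ*r + z^2 ∧
    Real.sin (π*β)^2 * z^2 ≤ r^2 + 2*z*γ*r + z^2 := by
  have h1 := Real.sin_sq_add_cos_sq (π*β)
  constructor
  · nlinarith [sq_nonneg (Real.cos (π*β)*r + z), mul_nonneg (mul_nonneg hz (sub_nonneg.2 hγ)) hr]
  · nlinarith [sq_nonneg (r + Real.cos (π*β)*z), mul_nonneg (mul_nonneg hz (sub_nonneg.2 hγ)) hr]

lemma rpow_two_mul {β t : ℝ} (ht : 0 < t) : t ^ (2*β) = (t^β)^2 := by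
  rw [two_mul, Real.rpow_add ht]; ring

lemma Qpos {β z t : ℝ} (hβ0 : 0 < β) (hβ1 : β < 1) (hz : 0 ≤ z) (ht : 0 < t) : 0 < Q β z t := by
  have h2 := rpow_two_mul (β := β) ht
  have hb := (quad_bound (β := β) hz (Real.rpow_nonneg ht.le β) (le_refl _)).1
  have hS := Spos hβ0 hβ1
  have htb : 0 < t ^ β := Real.rpow_pos_of_pos ht β
  have hpos : 0 < Real.sin (π*β)^2 * (t^β)^2 := by positivity
  unfold Q
  rw [h2]
  nlinarith

lemma fpos {β w z t : ℝ} (hβ0 : 0 < β) (hβ1 : β < 1) (hw : 0 ≤ w) (hz : 0 ≤ z) (ht : 0 < t) :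
    0 < f β w z t := by
  have h1 := Qpos hβ0 hβ1 hz ht
  have htb : 0 < t ^ β := Real.rpow_pos_of_pos ht β
  have h2 : 0 < (w + t) * Q β z t := by positivity
  exact div_pos htb h2

/-- norm lower bound for the complex denominator -/
lemma norm_denom_ge {β z : ℝ} (hβ0 : 0 < β) (hβ1 : β < 1) (hz : 0 ≤ z) {ξ : ℂ}
    (him : |ξ.im| ≤ π) :
    Real.sin (π*β) * Real.exp (β * ξ.re) ≤ Complex.abs (Complex.exp (β*ξ) + z) ∧
    Real.sin (π*β) * z ≤ Complex.abs (Complex.exp (β*ξ) + z) := by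
  have hS := Spos hβ0 hβ1
  set r := Real.exp (β * ξ.re) with hr
  have hrpos : 0 < r := Real.exp_pos _
  -- real and imaginary parts of exp(βξ)
  have hre : (Complex.exp (β*ξ)).re = r * Real.cos (β * ξ.im) := by
    rw [Complex.exp_re]; congr 2 <;> simp
  have him' : (Complex.exp (β*ξ)).im = r * Real.sin (β * ξ.im) := by
    rw [Complex.exp_im]; congr 2 <;> simp
  have hcos : Real.cos (π*β) ≤ Real.cos (β * ξ.im) := by
    have h1 : |β * ξ.im| ≤ β * π := by
      rw [abs_mul, abs_of_pos hβ0]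
      exact mul_le_mul_of_nonneg_left him hβ0.le
    calc Real.cos (π*β) = Real.cos (β*π) := by ring_nf
      _ ≤ Real.cos |β * ξ.im| := by
          apply Real.cos_le_cos_of_nonneg_of_le_pi (abs_nonneg _) _ h1
          nlinarith [Real.pi_pos]
      _ = Real.cos (β * ξ.im) := Real.cos_abs _
  -- square computation
  have habs2 : (Complex.abs (Complex.exp (β*ξ) + z))^2
      = r^2 + 2*z*(Real.cos (β * ξ.im))*r + z^2 := by
    rw [Complex.sq_abs, Complex.normSq_apply]
    simp only [Complex.add_re, Complex.add_im, Complex.ofReal_re, Complex.ofReal_im]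
    rw [hre, him']
    have : r^2 = r * Real.cos (β*ξ.im) * (r * Real.cos (β*ξ.im))
        + r * Real.sin (β*ξ.im) * (r * Real.sin (β*ξ.im)) := by
      have := Real.sin_sq_add_cos_sq (β*ξ.im); nlinarith
    nlinarith [this]
  have hb := quad_bound (β := β) hz hrpos.le hcos
  have h2 : ∀ a : ℝ, 0 ≤ a → a^2 ≤ (Complex.abs (Complex.exp (β*ξ) + z))^2
      → a ≤ Complex.abs (Complex.exp (β*ξ) + z) := by
    intro a ha h
    nlinarith [AbsoluteValue.nonneg Complex.abs (Complex.exp (β*ξ) + z)]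
  constructor
  · apply h2 _ (by positivity)
    rw [habs2]; calc (Real.sin (π*β) * r)^2 = Real.sin (π*β)^2 * r^2 := by ring
      _ ≤ _ := hb.1
  · apply h2 _ (by positivity)
    rw [habs2]; calc (Real.sin (π*β) * z)^2 = Real.sin (π*β)^2 * z^2 := by ring
      _ ≤ _ := hb.2

lemma denom_ne_zero {β z : ℝ} (hβ0 : 0 < β) (hβ1 : β < 1) (hz : 0 ≤ z) {ξ : ℂ}
    (him : |ξ.im| ≤ π) : Complex.exp (β*ξ) + z ≠ 0 := by
  intro h0
  have h1 := (norm_denom_ge hβ0 hβ1 hz him).1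
  rw [h0] at h1
  simp only [map_zero] at h1
  have hS := Spos hβ0 hβ1
  nlinarith [Real.exp_pos (β * ξ.re)]

lemma cexp_real_rpow {w : ℝ} (hw : 0 < w) (β : ℝ) :
    Complex.exp ((β:ℂ) * (Real.log w : ℂ)) = ((w ^ β : ℝ) : ℂ) := by
  rw [show ((β:ℂ) * (Real.log w : ℂ)) = ((β * Real.log w : ℝ) : ℂ) by push_cast; ring,
    ← Complex.ofReal_exp]
  congr 1
  rw [Real.rpow_def_of_pos hw, mul_comm]

/-- formula for G away from the singular point -/
lemma G_eq {β w z : ℝ} (hβ0 : 0 < β) (hw : 0 ≤ w) {ξ : ℂ} (hξ : Complex.exp ξ ≠ (w:ℂ)) :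
    G β w z ξ = (Complex.exp (β*ξ) - ((w^β : ℝ):ℂ)) * Complex.exp ξ /
      ((Complex.exp ξ - w) * (Complex.exp (β*ξ) + z)) := by
  unfold G
  rcases eq_or_lt_of_le hw with h0 | hwpos
  · rw [if_pos h0.symm, ← h0]
    rw [Real.zero_rpow (ne_of_gt hβ0)]
    have he := Complex.exp_ne_zero ξ
    simp only [Complex.ofReal_zero, sub_zero, div_mul_div_comm]
  · rw [if_neg (ne_of_gt hwpos)]
    have hne : ξ ≠ ((Real.log w : ℝ) : ℂ) := by
      intro hh
      apply hξ
      rw [hh, ← Complex.ofReal_exp, Real.exp_log hwpos]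
    have hsub : ξ - ((Real.log w : ℝ):ℂ) ≠ 0 := sub_ne_zero.2 hne
    rw [dslope_of_ne _ hne, dslope_of_ne _ hne]
    simp only [slope_def_field]
    rw [show Complex.exp ((Real.log w : ℂ)) = (w:ℂ) by
      rw [← Complex.ofReal_exp]; norm_cast; exact Real.exp_log hwpos]
    rw [cexp_real_rpow hwpos β]
    have h2 : Complex.exp ξ - (w:ℂ) ≠ 0 := sub_ne_zero.2 hξ
    field_simp

lemma exp_ne_of_re {w : ℝ} (hw : 0 ≤ w) {ξ : ℂ} (h : Real.exp ξ.re ≠ w) :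
    Complex.exp ξ ≠ (w:ℂ) := by
  intro h'
  apply h
  have h2 := congrArg Complex.abs h'
  rwa [Complex.abs_exp, Complex.abs_ofReal, _root_.abs_of_nonneg hw] at h2

/-- continuity of G on the region where `exp ξ ≠ w` -/
lemma G_contOn {β w z : ℝ} (hβ0 : 0 < β) (hβ1 : β < 1) (hw : 0 ≤ w) (hz : 0 ≤ z) :
    ContinuousOn (G β w z) {ξ : ℂ | Complex.exp ξ ≠ (w:ℂ) ∧ |ξ.im| ≤ π} := by
  set s := {ξ : ℂ | Complex.exp ξ ≠ (w:ℂ) ∧ |ξ.im| ≤ π}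
  have hF : ContinuousOn (fun ξ => (Complex.exp (β*ξ) - ((w^β : ℝ):ℂ)) * Complex.exp ξ /
      ((Complex.exp ξ - w) * (Complex.exp (β*ξ) + z))) s := by
    apply ContinuousOn.div
    · fun_prop
    · fun_prop
    · intro ξ hξ
      exact mul_ne_zero (sub_ne_zero.2 hξ.1) (denom_ne_zero hβ0 hβ1 hz hξ.2)
  exact hF.congr (fun ξ hξ => G_eq hβ0 hw hξ.1)

lemma mem_rect_im {n : ℕ} {ξ : ℂ} (hξ : ξ ∈ (Set.uIcc (-(n:ℝ)) (n:ℝ)) ×ℂ (Set.uIcc (-π) π)) :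
    |ξ.im| ≤ π := by
  have h2 := (Complex.mem_reProdIm.1 hξ).2
  rw [Set.uIcc_of_le (by linarith [Real.pi_pos] : -π ≤ π)] at h2
  exact abs_le.2 ⟨h2.1, h2.2⟩

/-- differentiability on closed rectangles -/
lemma G_diffOn {β w z : ℝ} {n : ℕ} (hβ0 : 0 < β) (hβ1 : β < 1) (hw : 0 ≤ w) (hz : 0 ≤ z)
    (hn : |Real.log w| < n) :
    DifferentiableOn ℂ (G β w z) ((Set.uIcc (-(n:ℝ)) (n:ℝ)) ×ℂ (Set.uIcc (-π) π)) := by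
  set rect := (Set.uIcc (-(n:ℝ)) (n:ℝ)) ×ℂ (Set.uIcc (-π) π) with hrect
  have hfrac : DifferentiableOn ℂ (fun ξ => Complex.exp ξ / (Complex.exp (β*ξ) + z)) rect := by
    apply DifferentiableOn.div
    · exact Complex.differentiable_exp.differentiableOn
    · apply DifferentiableOn.add_const
      exact (Differentiable.cexp ((differentiable_const (β:ℂ)).mul differentiable_id)).differentiableOn
    · intro ξ hξ
      exact denom_ne_zero hβ0 hβ1 hz (mem_rect_im hξ)
  unfold G
  rcases eq_or_lt_of_le hw with h0 | hwpos
  · simp only [if_pos h0.symm]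
    apply DifferentiableOn.mul _ hfrac
    apply DifferentiableOn.div
    · exact (Differentiable.cexp ((differentiable_const (β:ℂ)).mul differentiable_id)).differentiableOn
    · exact Complex.differentiable_exp.differentiableOn
    · intro ξ _; exact Complex.exp_ne_zero ξ
  · simp only [if_neg (ne_of_gt hwpos)]
    have hnhds : rect ∈ nhds ((Real.log w : ℝ) : ℂ) := by
      rw [mem_nhds_iff]
      refine ⟨(Set.Ioo (-(n:ℝ)) (n:ℝ)) ×ℂ (Set.Ioo (-π) π), ?_, ?_, ?_⟩
      · intro ξ hξ
        rw [Complex.mem_reProdIm] at hξ ⊢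
        constructor
        · rw [Set.uIcc_of_le (neg_le_self (Nat.cast_nonneg n))]
          exact Set.Ioo_subset_Icc_self hξ.1
        · rw [Set.uIcc_of_le (by linarith [Real.pi_pos] : -π ≤ π)]
          exact Set.Ioo_subset_Icc_self hξ.2
      · exact IsOpen.reProdIm isOpen_Ioo isOpen_Ioo
      · rw [Complex.mem_reProdIm]
        constructor
        · simp only [Complex.ofReal_re]
          exact abs_lt.1 hn
        · simp only [Complex.ofReal_im]
          constructor <;> linarith [Real.pi_pos]
    apply DifferentiableOn.mul _ hfrac
    apply DifferentiableOn.div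
    · exact (Complex.differentiableOn_dslope hnhds).2
        (Differentiable.cexp ((differentiable_const (β:ℂ)).mul differentiable_id)).differentiableOn
    · exact (Complex.differentiableOn_dslope hnhds).2 Complex.differentiable_exp.differentiableOn
    · intro ξ hξ
      by_cases hne : ξ = ((Real.log w : ℝ) : ℂ)
      · rw [hne, dslope_same]
        rw [Complex.deriv_exp]
        exact Complex.exp_ne_zero _
      · rw [dslope_of_ne _ hne, slope_def_field]
        apply div_ne_zero _ (sub_ne_zero.2 hne)
        rw [sub_ne_zero]
        intro heq
        apply hne
        rw [Complex.exp_eq_exp_iff_exists_int] at heq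
        obtain ⟨k, hk⟩ := heq
        have him : ξ.im = k * (2 * π) := by
          rw [hk]
          simp
        have h3 : |ξ.im| ≤ π := mem_rect_im hξ
        have hk0 : k = 0 := by
          rw [him, abs_mul] at h3
          by_contra hk0
          have hk1 : (1:ℝ) ≤ |(k:ℝ)| := by
            have h5 : (1:ℤ) ≤ |k| := Int.one_le_abs (by exact_mod_cast hk0)
            calc (1:ℝ) = ((1:ℤ):ℝ) := by norm_num
              _ ≤ ((|k|:ℤ):ℝ) := by exact_mod_cast h5
              _ = |(k:ℝ)| := by push_cast; rfl
          rw [_root_.abs_of_pos (by positivity : (0:ℝ) < 2*π)] at h3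
          nlinarith [Real.pi_pos]
        rw [hk, hk0]
        simp

lemma g_formula {β w z : ℝ} (x : ℝ) :
    g β w z x = Real.exp x * Real.exp (β*x) /
      ((w + Real.exp x) * ((Real.exp (β*x))^2 + 2*z*Real.cos (π*β)*Real.exp (β*x) + z^2)) := by
  unfold g f Q
  have h1 : (Real.exp x) ^ β = Real.exp (β*x) := by
    rw [← Real.exp_mul, mul_comm]
  have h2 : (Real.exp x) ^ (2*β) = (Real.exp (β*x))^2 := by
    rw [← Real.exp_mul, show x*(2*β) = (β*x)*2 by ring, Real.exp_mul,
      ← Real.rpow_natCast (Real.exp (β*x)) 2]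
    norm_num
  rw [h1, h2]
  ring

lemma edge_diff {β w z : ℝ} (hβ0 : 0 < β) (hβ1 : β < 1) (hw : 0 ≤ w) (hz : 0 ≤ z) (x : ℝ) :
    G β w z ((x:ℂ) + (π:ℝ)*Complex.I) - G β w z ((x:ℂ) + (-π:ℝ)*Complex.I) =
      (2 * Real.sin (π*β) * ((w^β:ℝ) + z) * Complex.I) * ((g β w z x : ℝ) : ℂ) := by
  have hS := Spos hβ0 hβ1
  set S := Real.sin (π*β) with hSdef
  set c := Real.cos (π*β) with hcdef
  set E := Real.exp x with hEdef
  set r := Real.exp (β*x) with hrdef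
  have hEpos : 0 < E := Real.exp_pos _
  have hrpos : 0 < r := Real.exp_pos _
  have hexp_top : Complex.exp ((x:ℂ) + (π:ℝ)*Complex.I) = -(E:ℂ) := by
    rw [Complex.exp_add, Complex.exp_pi_mul_I, hEdef, ← Complex.ofReal_exp]
    ring
  have hexp_bot : Complex.exp ((x:ℂ) + (-π:ℝ)*Complex.I) = -(E:ℂ) := by
    rw [Complex.exp_add, hEdef, ← Complex.ofReal_exp]
    rw [show ((-π : ℝ):ℂ) * Complex.I = -((π:ℝ) * Complex.I) by push_cast; ring,
      Complex.exp_neg, Complex.exp_pi_mul_I]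
    norm_num
  have hu_top : Complex.exp ((β:ℂ) * ((x:ℂ) + (π:ℝ)*Complex.I)) = (r:ℂ) * ((c:ℂ) + (S:ℂ)*Complex.I) := by
    rw [show (β:ℂ) * ((x:ℂ) + (π:ℝ)*Complex.I) = ((β*x : ℝ):ℂ) + ((β*π : ℝ):ℂ) * Complex.I by
      push_cast; ring]
    rw [Complex.exp_add, ← Complex.ofReal_exp, Complex.exp_mul_I, ← Complex.ofReal_cos,
      ← Complex.ofReal_sin, hrdef, hSdef, hcdef, mul_comm β π]
  have hu_bot : Complex.exp ((β:ℂ) * ((x:ℂ) + (-π:ℝ)*Complex.I)) = (r:ℂ) * ((c:ℂ) - (S:ℂ)*Complex.I) := by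
    rw [show (β:ℂ) * ((x:ℂ) + (-π:ℝ)*Complex.I) = ((β*x : ℝ):ℂ) + ((-(β*π) : ℝ):ℂ) * Complex.I by
      push_cast; ring]
    rw [Complex.exp_add, ← Complex.ofReal_exp, Complex.exp_mul_I, ← Complex.ofReal_cos,
      ← Complex.ofReal_sin, hrdef]
    rw [Real.cos_neg, Real.sin_neg, mul_comm β π, ← hSdef, ← hcdef]
    push_cast
    ring
  have hne : ∀ a : ℝ, Complex.exp ((x:ℂ) + (a:ℝ)*Complex.I) = -(E:ℂ) →
      Complex.exp ((x:ℂ) + (a:ℝ)*Complex.I) ≠ (w:ℂ) := by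
    intro a ha
    rw [ha]
    rw [show -(E:ℂ) = ((-E : ℝ):ℂ) by push_cast; ring]
    intro hcon
    rw [Complex.ofReal_inj] at hcon
    linarith
  rw [G_eq hβ0 hw (hne π hexp_top), G_eq hβ0 hw (hne (-π) hexp_bot),
    hexp_top, hexp_bot, hu_top, hu_bot, g_formula, ← hEdef, ← hrdef, ← hcdef]
  -- now pure complex algebra
  have hcs : ((c:ℂ))^2 + ((S:ℂ))^2 = 1 := by
    have hreal : c^2 + S^2 = 1 := by
      rw [hSdef, hcdef]; exact Real.cos_sq_add_sin_sq _
    exact_mod_cast hreal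
  have hQfact : ((r:ℂ))^2 + 2*(z:ℂ)*(c:ℂ)*(r:ℂ) + ((z:ℂ))^2 =
      ((r:ℂ) * ((c:ℂ) + (S:ℂ)*Complex.I) + z) * ((r:ℂ) * ((c:ℂ) - (S:ℂ)*Complex.I) + z) := by
    linear_combination (-(r:ℂ)^2) * hcs + ((r:ℂ)^2*((S:ℂ))^2) * Complex.I_sq
  have hD1 : (r:ℂ) * ((c:ℂ) + (S:ℂ)*Complex.I) + z ≠ 0 := by
    intro h0
    have h1 := congrArg Complex.im h0
    simp at h1
    rcases h1 with h1 | h1 <;> nlinarith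
  have hD2 : (r:ℂ) * ((c:ℂ) - (S:ℂ)*Complex.I) + z ≠ 0 := by
    intro h0
    have h1 := congrArg Complex.im h0
    simp at h1
    rcases h1 with h1 | h1 <;> nlinarith
  have hEw : -(E:ℂ) - w ≠ 0 := by
    rw [show -(E:ℂ) - w = ((-E - w : ℝ):ℂ) by push_cast; ring]
    intro h0
    rw [show (0:ℂ) = ((0:ℝ):ℂ) by norm_num, Complex.ofReal_inj] at h0
    linarith
  have hwE : (w:ℂ) + E ≠ 0 := by
    rw [show (w:ℂ) + E = ((w + E : ℝ):ℂ) by push_cast; ring]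
    intro h0
    rw [show (0:ℂ) = ((0:ℝ):ℂ) by norm_num, Complex.ofReal_inj] at h0
    linarith
  have hgc : ((Real.exp x * Real.exp (β*x) /
      ((w + Real.exp x) * ((Real.exp (β*x))^2 + 2*z*c*Real.exp (β*x) + z^2)) : ℝ) : ℂ)
      = (E:ℂ)*(r:ℂ) / (((w:ℂ)+(E:ℂ)) *
        (((r:ℂ) * ((c:ℂ) + (S:ℂ)*Complex.I) + z) * ((r:ℂ) * ((c:ℂ) - (S:ℂ)*Complex.I) + z))) := by
    rw [← hQfact, ← hEdef, ← hrdef]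
    push_cast
    ring
  rw [hgc]
  field_simp
  ring

lemma G_sub_one_bound {β w z : ℝ} (hβ0 : 0 < β) (hβ1 : β < 1) (hw : 0 ≤ w) (hz : 0 ≤ z)
    {ξ : ℂ} (him : |ξ.im| ≤ π) (hre : 2*w+1 ≤ Real.exp ξ.re) :
    Complex.abs (G β w z ξ - 1) ≤
      2*((w^β:ℝ)+z)/(Real.sin (π*β)*Real.exp (β*ξ.re)) + 2*w/Real.exp ξ.re := by
  have hS := Spos hβ0 hβ1
  have hx : 0 < Real.exp ξ.re := Real.exp_pos _
  have hbx : 0 < Real.exp (β*ξ.re) := Real.exp_pos _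
  have hA : 0 ≤ (w^β : ℝ) := Real.rpow_nonneg hw β
  have hEw : Real.exp ξ.re ≠ w := by nlinarith
  have hne := exp_ne_of_re hw hEw
  have habsE : Complex.abs (Complex.exp ξ) = Real.exp ξ.re := Complex.abs_exp ξ
  have hEsub : Complex.exp ξ - (w:ℂ) ≠ 0 := sub_ne_zero.2 hne
  have hden := (norm_denom_ge hβ0 hβ1 hz him).1
  have hdne := denom_ne_zero hβ0 hβ1 hz him
  -- lower bound for |E - w|
  have hlow : (Real.exp ξ.re)/2 ≤ Complex.abs (Complex.exp ξ - (w:ℂ)) := by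
    have h1 : Complex.abs (Complex.exp ξ) - Complex.abs ((w:ℂ)) ≤
        Complex.abs (Complex.exp ξ - (w:ℂ)) := by
      simpa [Complex.norm_eq_abs] using norm_sub_norm_le (Complex.exp ξ) ((w:ℂ))
    rw [habsE, Complex.abs_ofReal, _root_.abs_of_nonneg hw] at h1
    nlinarith
  -- decomposition
  have hdecomp : G β w z ξ - 1 =
      (-(((w^β:ℝ):ℂ)+z)) * Complex.exp ξ / ((Complex.exp ξ - w) * (Complex.exp (β*ξ) + z))
      + (w:ℂ)/(Complex.exp ξ - w) := by
    rw [G_eq hβ0 hw hne]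
    field_simp
    ring
  rw [hdecomp]
  have habs1 : Complex.abs ((-(((w^β:ℝ):ℂ)+z)) * Complex.exp ξ /
      ((Complex.exp ξ - w) * (Complex.exp (β*ξ) + z))) ≤
      2*((w^β:ℝ)+z)/(Real.sin (π*β)*Real.exp (β*ξ.re)) := by
    rw [map_div₀, map_mul, map_mul, map_neg_eq_map, habsE]
    have hnum : Complex.abs (((w^β:ℝ):ℂ) + z) = (w^β:ℝ) + z := by
      rw [show ((w^β:ℝ):ℂ) + (z:ℂ) = (((w^β:ℝ) + z : ℝ):ℂ) by push_cast; ring,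
        Complex.abs_ofReal, _root_.abs_of_nonneg (by positivity)]
    rw [hnum]
    rw [div_le_div_iff₀ (mul_pos (Complex.abs.pos hEsub) (Complex.abs.pos hdne)) (by positivity)]
    have hd2 : (Real.exp ξ.re)/2 * (Real.sin (π*β) * Real.exp (β*ξ.re)) ≤
        Complex.abs (Complex.exp ξ - w) * Complex.abs (Complex.exp (β*ξ) + z) := by
      apply mul_le_mul hlow hden (by positivity) (by positivity)
    nlinarith [mul_le_mul_of_nonneg_left hd2 (by positivity : (0:ℝ) ≤ 2*((w^β:ℝ)+z))]
  have habs2 : Complex.abs ((w:ℂ)/(Complex.exp ξ - w)) ≤ 2*w/Real.exp ξ.re := by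
    rw [map_div₀, Complex.abs_ofReal, _root_.abs_of_nonneg hw]
    rw [div_le_div_iff₀ (Complex.abs.pos hEsub) hx]
    nlinarith [mul_le_mul_of_nonneg_left hlow (by linarith : (0:ℝ) ≤ 2*w)]
  calc Complex.abs _ ≤ _ := AbsoluteValue.add_le Complex.abs _ _
    _ ≤ _ := add_le_add habs1 habs2

lemma G_left_bound_pos {β w z : ℝ} (hβ0 : 0 < β) (hβ1 : β < 1) (hwpos : 0 < w) (hz : 0 ≤ z)
    {ξ : ℂ} (him : |ξ.im| ≤ π) (hre : Real.exp ξ.re ≤ w/2) :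
    Complex.abs (G β w z ξ) ≤
      (2/(w*Real.sin (π*β))) * (Real.exp ξ.re + (w^β:ℝ) * Real.exp ((1-β)*ξ.re)) := by
  have hS := Spos hβ0 hβ1
  have hx : 0 < Real.exp ξ.re := Real.exp_pos _
  have hbx : 0 < Real.exp (β*ξ.re) := Real.exp_pos _
  have hA : 0 ≤ (w^β : ℝ) := Real.rpow_nonneg hwpos.le β
  have hEw : Real.exp ξ.re ≠ w := by nlinarith
  have hne := exp_ne_of_re hwpos.le hEw
  have habsE : Complex.abs (Complex.exp ξ) = Real.exp ξ.re := Complex.abs_exp ξ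
  have habsu : Complex.abs (Complex.exp ((β:ℂ)*ξ)) = Real.exp (β*ξ.re) := by
    rw [Complex.abs_exp]
    congr 1
    simp
  have hEsub : Complex.exp ξ - (w:ℂ) ≠ 0 := sub_ne_zero.2 hne
  have hden := (norm_denom_ge hβ0 hβ1 hz him).1
  have hdne := denom_ne_zero hβ0 hβ1 hz him
  have hlow : w/2 ≤ Complex.abs (Complex.exp ξ - (w:ℂ)) := by
    have h1 : Complex.abs ((w:ℂ)) - Complex.abs (Complex.exp ξ) ≤
        Complex.abs (Complex.exp ξ - (w:ℂ)) := by
      have := norm_sub_norm_le ((w:ℂ)) (Complex.exp ξ)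
      rw [← norm_neg ((w:ℂ) - Complex.exp ξ)] at this
      simpa [Complex.norm_eq_abs, neg_sub] using this
    rw [habsE, Complex.abs_ofReal, _root_.abs_of_nonneg hwpos.le] at h1
    nlinarith
  rw [G_eq hβ0 hwpos.le hne, map_div₀, map_mul, map_mul, habsE]
  have hnum : Complex.abs (Complex.exp ((β:ℂ)*ξ) - ((w^β:ℝ):ℂ)) ≤ Real.exp (β*ξ.re) + (w^β:ℝ) := by
    calc Complex.abs (Complex.exp ((β:ℂ)*ξ) - ((w^β:ℝ):ℂ))
        ≤ Complex.abs (Complex.exp ((β:ℂ)*ξ)) + Complex.abs (((w^β:ℝ):ℂ)) :=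
          AbsoluteValue.sub_le_add Complex.abs _ _
      _ = Real.exp (β*ξ.re) + (w^β:ℝ) := by
          rw [habsu, Complex.abs_ofReal, _root_.abs_of_nonneg hA]
  have hdpos : 0 < Complex.abs (Complex.exp ξ - w) * Complex.abs (Complex.exp (β*ξ) + z) :=
    mul_pos (Complex.abs.pos hEsub) (Complex.abs.pos hdne)
  rw [div_le_iff₀ hdpos]
  have hprod : (w/2) * (Real.sin (π*β) * Real.exp (β*ξ.re)) ≤
      Complex.abs (Complex.exp ξ - w) * Complex.abs (Complex.exp (β*ξ) + z) :=
    mul_le_mul hlow hden (by positivity) (by positivity)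
  have hexp1 : Real.exp ((1-β)*ξ.re) * Real.exp (β*ξ.re) = Real.exp ξ.re := by
    rw [← Real.exp_add]; ring_nf
  have hmain : Complex.abs (Complex.exp ((β:ℂ)*ξ) - ((w^β:ℝ):ℂ)) * Real.exp ξ.re ≤
      ((2/(w*Real.sin (π*β))) * (Real.exp ξ.re + (w^β:ℝ) * Real.exp ((1-β)*ξ.re))) *
      ((w/2) * (Real.sin (π*β) * Real.exp (β*ξ.re))) := by
    have hrhs : ((2/(w*Real.sin (π*β))) * (Real.exp ξ.re + (w^β:ℝ) * Real.exp ((1-β)*ξ.re))) *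
        ((w/2) * (Real.sin (π*β) * Real.exp (β*ξ.re)))
        = (Real.exp ξ.re + (w^β:ℝ) * Real.exp ((1-β)*ξ.re)) * Real.exp (β*ξ.re) := by
      field_simp
    rw [hrhs]
    calc Complex.abs (Complex.exp ((β:ℂ)*ξ) - ((w^β:ℝ):ℂ)) * Real.exp ξ.re
        ≤ (Real.exp (β*ξ.re) + (w^β:ℝ)) * Real.exp ξ.re :=
          mul_le_mul_of_nonneg_right hnum hx.le
      _ = (Real.exp ξ.re + (w^β:ℝ) * Real.exp ((1-β)*ξ.re)) * Real.exp (β*ξ.re) := by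
          rw [← hexp1]; ring
  calc Complex.abs (Complex.exp ((β:ℂ)*ξ) - ((w^β:ℝ):ℂ)) * Real.exp ξ.re
      ≤ _ := hmain
    _ ≤ _ := by
        apply mul_le_mul_of_nonneg_left hprod
        positivity

lemma G_left_bound_zero {β w z : ℝ} (hβ0 : 0 < β) (hβ1 : β < 1) (hw0 : w = 0) (hz : 0 < z)
    {ξ : ℂ} (him : |ξ.im| ≤ π) :
    Complex.abs (G β w z ξ) ≤ Real.exp (β*ξ.re) / (Real.sin (π*β) * z) := by
  have hS := Spos hβ0 hβ1
  have hx : 0 < Real.exp ξ.re := Real.exp_pos _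
  have hbx : 0 < Real.exp (β*ξ.re) := Real.exp_pos _
  have hne : Complex.exp ξ ≠ (w:ℂ) := by
    rw [hw0]
    push_cast
    exact Complex.exp_ne_zero ξ
  have habsE : Complex.abs (Complex.exp ξ) = Real.exp ξ.re := Complex.abs_exp ξ
  have habsu : Complex.abs (Complex.exp ((β:ℂ)*ξ)) = Real.exp (β*ξ.re) := by
    rw [Complex.abs_exp]; congr 1; simp
  have hden := (norm_denom_ge hβ0 hβ1 hz.le him).2
  have hdne := denom_ne_zero hβ0 hβ1 hz.le him
  rw [G_eq hβ0 (le_of_eq hw0.symm) hne, hw0]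
  rw [Real.zero_rpow (ne_of_gt hβ0)]
  simp only [Complex.ofReal_zero, sub_zero]
  rw [map_div₀, map_mul, map_mul, habsE, habsu]
  have hDpos : 0 < Complex.abs (Complex.exp (β*ξ) + z) := Complex.abs.pos hdne
  rw [div_le_div_iff₀ (mul_pos hx hDpos) (by positivity)]
  nlinarith [mul_le_mul_of_nonneg_left hden (by positivity : (0:ℝ) ≤ Real.exp (β*ξ.re) * Real.exp ξ.re)]

lemma f_contOn {β w z : ℝ} (hβ0 : 0 < β) (hβ1 : β < 1) (hw : 0 ≤ w) (hz : 0 ≤ z) :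
    ContinuousOn (f β w z) (Set.Ioi 0) := by
  apply ContinuousOn.div
  · exact continuousOn_id.rpow_const (fun t ht => Or.inl (ne_of_gt ht))
  · apply ContinuousOn.mul
    · fun_prop
    · unfold Q
      apply ContinuousOn.add
      apply ContinuousOn.add
      · exact continuousOn_id.rpow_const (fun t ht => Or.inl (ne_of_gt ht))
      · exact continuousOn_const.mul (continuousOn_id.rpow_const (fun t ht => Or.inl (ne_of_gt ht)))
      · exact continuousOn_const
  · intro t ht
    have h1 := Qpos hβ0 hβ1 hz ht
    have h2 : 0 < w + t := by have := Set.mem_Ioi.1 ht; linarith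
    positivity

lemma f_integrable {β w z : ℝ} (hβ0 : 0 < β) (hβ1 : β < 1) (hw : 0 ≤ w) (hz : 0 ≤ z)
    (hwz : 0 < w ^ β + z) : IntegrableOn (f β w z) (Set.Ioi 0) := by
  have hS := Spos hβ0 hβ1
  have hS2 : 0 < Real.sin (π*β)^2 := by positivity
  have hmeas1 : AEStronglyMeasurable (f β w z) (volume.restrict (Set.Ioc (0:ℝ) 1)) :=
    ((f_contOn hβ0 hβ1 hw hz).mono Set.Ioc_subset_Ioi_self).aestronglyMeasurable measurableSet_Ioc
  have hmeas2 : AEStronglyMeasurable (f β w z) (volume.restrict (Set.Ioi (1:ℝ))) :=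
    ((f_contOn hβ0 hβ1 hw hz).mono (Set.Ioi_subset_Ioi zero_le_one)).aestronglyMeasurable
      measurableSet_Ioi
  have hbound : ∀ t : ℝ, 0 < t → (w + t) * (Real.sin (π*β)^2 * (t^β)^2) ≤ (w+t) * Q β z t := by
    intro t ht
    apply mul_le_mul_of_nonneg_left _ (by linarith)
    have := (quad_bound (β := β) hz (Real.rpow_nonneg ht.le β) (le_refl (Real.cos (π*β)))).1
    unfold Q
    rw [rpow_two_mul ht]
    nlinarith
  have hQz : ∀ t : ℝ, 0 < t → Real.sin (π*β)^2 * z^2 ≤ Q β z t := by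
    intro t ht
    have := (quad_bound (β := β) hz (Real.rpow_nonneg ht.le β) (le_refl (Real.cos (π*β)))).2
    unfold Q
    rw [rpow_two_mul ht]
    nlinarith
  -- integrable on Ioi 1
  have hint2 : IntegrableOn (f β w z) (Set.Ioi 1) := by
    apply Integrable.mono' ((integrableOn_Ioi_rpow_of_lt (show -β-1 < -1 by linarith)
      one_pos).const_mul ((Real.sin (π*β)^2)⁻¹)) hmeas2
    rw [ae_restrict_iff' measurableSet_Ioi]
    filter_upwards with t ht
    have ht0 : (0:ℝ) < t := lt_trans one_pos ht
    have htb : 0 < t ^ β := Real.rpow_pos_of_pos ht0 β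
    have hf := fpos hβ0 hβ1 hw hz ht0
    rw [Real.norm_eq_abs, _root_.abs_of_pos hf]
    have hd : t * (Real.sin (π*β)^2 * (t^β)^2) ≤ (w+t) * Q β z t := by
      calc t * (Real.sin (π*β)^2 * (t^β)^2) ≤ (w+t) * (Real.sin (π*β)^2 * (t^β)^2) := by
            nlinarith [mul_nonneg hw (by positivity : (0:ℝ) ≤ Real.sin (π*β)^2 * (t^β)^2)]
        _ ≤ _ := hbound t ht0
    calc f β w z t ≤ t^β / (t * (Real.sin (π*β)^2 * (t^β)^2)) :=
          div_le_div_of_nonneg_left htb.le (mul_pos ht0 (mul_pos hS2 (pow_pos htb 2))) hd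
      _ = (Real.sin (π*β)^2)⁻¹ * t ^ (-β-1) := by
          have he : t^(-β-1) = t^β / (t * (t^β)^2) := by
            rw [← rpow_two_mul ht0, show t * t^(2*β) = t^(1+2*β) by
              rw [Real.rpow_add ht0, Real.rpow_one], ← Real.rpow_sub ht0]
            congr 1
            ring
          rw [he]
          field_simp [ht0.ne', htb.ne']
          try ring
  -- integrable on Ioc 0 1
  have hint1 : IntegrableOn (f β w z) (Set.Ioc 0 1) := by
    rcases eq_or_lt_of_le hw with h0 | hwpos
    · -- w = 0, so z > 0
      have hz0 : 0 < z := by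
        rw [← h0, Real.zero_rpow (ne_of_gt hβ0)] at hwz
        linarith
      have hii : IntegrableOn (fun t : ℝ => t ^ (β-1)) (Set.Ioc (0:ℝ) 1) := by
        have := intervalIntegral.intervalIntegrable_rpow' (show (-1:ℝ) < β-1 by linarith)
          (a := 0) (b := 1)
        rwa [intervalIntegrable_iff, Set.uIoc_of_le zero_le_one] at this
      apply Integrable.mono' (hii.const_mul ((Real.sin (π*β)^2 * z^2)⁻¹)) hmeas1
      rw [ae_restrict_iff' measurableSet_Ioc]
      filter_upwards with t ht
      have ht0 : (0:ℝ) < t := ht.1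
      have htb : 0 < t ^ β := Real.rpow_pos_of_pos ht0 β
      have hf := fpos hβ0 hβ1 hw hz ht0
      rw [Real.norm_eq_abs, _root_.abs_of_pos hf]
      have hQ := Qpos hβ0 hβ1 hz ht0
      have hd : t * (Real.sin (π*β)^2 * z^2) ≤ (w+t) * Q β z t := by
        calc t * (Real.sin (π*β)^2 * z^2) ≤ t * Q β z t := by
              nlinarith [hQz t ht0]
          _ ≤ (w+t) * Q β z t := by nlinarith
      calc f β w z t ≤ t^β / (t * (Real.sin (π*β)^2 * z^2)) :=
            div_le_div_of_nonneg_left htb.le (mul_pos ht0 (by positivity)) hd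
        _ = (Real.sin (π*β)^2 * z^2)⁻¹ * t ^ (β-1) := by
            have he : t^(β-1) = t^β / t := by
              rw [Real.rpow_sub ht0, Real.rpow_one]
            rw [he]
            field_simp [ht0.ne', htb.ne']
            try ring
    · -- w > 0
      have hii : IntegrableOn (fun t : ℝ => t ^ (-β)) (Set.Ioc (0:ℝ) 1) := by
        have := intervalIntegral.intervalIntegrable_rpow' (show (-1:ℝ) < -β by linarith)
          (a := 0) (b := 1)
        rwa [intervalIntegrable_iff, Set.uIoc_of_le zero_le_one] at this
      apply Integrable.mono' (hii.const_mul ((w * Real.sin (π*β)^2)⁻¹)) hmeas1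
      rw [ae_restrict_iff' measurableSet_Ioc]
      filter_upwards with t ht
      have ht0 : (0:ℝ) < t := ht.1
      have htb : 0 < t ^ β := Real.rpow_pos_of_pos ht0 β
      have hf := fpos hβ0 hβ1 hw hz ht0
      rw [Real.norm_eq_abs, _root_.abs_of_pos hf]
      have hd : w * (Real.sin (π*β)^2 * (t^β)^2) ≤ (w+t) * Q β z t := by
        calc w * (Real.sin (π*β)^2 * (t^β)^2) ≤ (w+t) * (Real.sin (π*β)^2 * (t^β)^2) := by
              nlinarith [mul_nonneg ht0.le (by positivity : (0:ℝ) ≤ Real.sin (π*β)^2 * (t^β)^2)]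
          _ ≤ _ := hbound t ht0
      calc f β w z t ≤ t^β / (w * (Real.sin (π*β)^2 * (t^β)^2)) :=
            div_le_div_of_nonneg_left htb.le (mul_pos hwpos (mul_pos hS2 (pow_pos htb 2))) hd
        _ = (w * Real.sin (π*β)^2)⁻¹ * t ^ (-β) := by
            have he : t^(-β) = t^β / (t^β)^2 := by
              rw [← rpow_two_mul ht0, ← Real.rpow_sub ht0]
              congr 1
              ring
            rw [he]
            field_simp [ht0.ne', htb.ne']
            try ring
  have := hint1.union hint2
  rwa [Set.Ioc_union_Ioi_eq_Ioi zero_le_one] at this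

lemma change_of_vars {β w z : ℝ} (hβ0 : 0 < β) (hβ1 : β < 1) (hw : 0 ≤ w) (hz : 0 ≤ z)
    (n : ℕ) : ∫ x in (-(n:ℝ))..(n:ℝ), g β w z x
      = ∫ t in (Real.exp (-(n:ℝ)))..(Real.exp (n:ℝ)), f β w z t := by
  have h := intervalIntegral.integral_comp_smul_deriv'' (f := Real.exp) (f' := Real.exp)
    (g := f β w z) (a := -(n:ℝ)) (b := (n:ℝ))
    (Real.continuous_exp.continuousOn)
    (fun x _ => (Real.hasDerivAt_exp x).hasDerivWithinAt)
    (Real.continuous_exp.continuousOn)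
    (((f_contOn hβ0 hβ1 hw hz)).mono (by
      intro t ht
      obtain ⟨x, _, rfl⟩ := ht
      exact Real.exp_pos x))
  simpa [g, smul_eq_mul] using h

lemma truncated_tendsto {β w z : ℝ} (hβ0 : 0 < β) (hβ1 : β < 1) (hw : 0 ≤ w) (hz : 0 ≤ z)
    (hwz : 0 < w ^ β + z) :
    Filter.Tendsto (fun n : ℕ => ∫ t in (Real.exp (-(n:ℝ)))..(Real.exp (n:ℝ)), f β w z t)
      Filter.atTop (nhds (∫ t in Set.Ioi (0:ℝ), f β w z t)) := by
  have hint := f_integrable hβ0 hβ1 hw hz hwz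
  have hint1 : IntegrableOn (f β w z) (Set.Ioc 0 1) := hint.mono_set Set.Ioc_subset_Ioi_self
  have hintIoi1 : IntegrableOn (f β w z) (Set.Ioi 1) :=
    hint.mono_set (Set.Ioi_subset_Ioi zero_le_one)
  -- part 1 : ∫_1^{e^n}
  have hpart2 : Filter.Tendsto (fun n : ℕ => ∫ t in (1:ℝ)..(Real.exp (n:ℝ)), f β w z t)
      Filter.atTop (nhds (∫ t in Set.Ioi (1:ℝ), f β w z t)) := by
    apply intervalIntegral_tendsto_integral_Ioi 1 hintIoi1
    exact Real.tendsto_exp_atTop.comp tendsto_natCast_atTop_atTop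
  -- part 2 : ∫_{e^{-n}}^1
  have hpart1 : Filter.Tendsto (fun n : ℕ => ∫ t in (Real.exp (-(n:ℝ)))..(1:ℝ), f β w z t)
      Filter.atTop (nhds (∫ t in Set.Ioc (0:ℝ) 1, f β w z t)) := by
    have hmono : Monotone (fun n : ℕ => Set.Ioc (Real.exp (-(n:ℝ))) 1) := by
      intro a b hab
      apply Set.Ioc_subset_Ioc_left
      apply Real.exp_le_exp.2
      simp only [neg_le_neg_iff]
      exact_mod_cast hab
    have hunion : (⋃ n : ℕ, Set.Ioc (Real.exp (-(n:ℝ))) 1) = Set.Ioc (0:ℝ) 1 := by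
      ext x
      simp only [Set.mem_iUnion, Set.mem_Ioc]
      constructor
      · rintro ⟨n, h1, h2⟩
        exact ⟨lt_trans (Real.exp_pos _) h1, h2⟩
      · rintro ⟨h1, h2⟩
        obtain ⟨n, hn⟩ := exists_nat_gt (-Real.log x)
        refine ⟨n, ?_, h2⟩
        have : Real.exp (-(n:ℝ)) < Real.exp (Real.log x) := by
          apply Real.exp_lt_exp.2
          linarith
        rwa [Real.exp_log h1] at this
      
    have := tendsto_setIntegral_of_monotone
      (fun n : ℕ => measurableSet_Ioc) hmono (by rw [hunion]; exact hint1)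
    rw [hunion] at this
    apply this.congr
    intro n
    rw [intervalIntegral.integral_of_le (by
      calc Real.exp (-(n:ℝ)) ≤ 1 := Real.exp_le_one_iff.2 (by simp)
      )]
  -- combine
  have hsplit : ∀ n : ℕ, ∫ t in (Real.exp (-(n:ℝ)))..(Real.exp (n:ℝ)), f β w z t
      = (∫ t in (Real.exp (-(n:ℝ)))..(1:ℝ), f β w z t)
        + ∫ t in (1:ℝ)..(Real.exp (n:ℝ)), f β w z t := by
    intro n
    rw [intervalIntegral.integral_add_adjacent_intervals]
    · rw [intervalIntegrable_iff, Set.uIoc_of_le (Real.exp_le_one_iff.2 (by simp))]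
      exact hint.mono_set (fun t ht => lt_trans (Real.exp_pos _) ht.1)
    · rw [intervalIntegrable_iff, Set.uIoc_of_le (Real.one_le_exp (by positivity))]
      exact hint.mono_set (fun t ht => lt_trans one_pos ht.1)
  have htotal : (∫ t in Set.Ioi (0:ℝ), f β w z t)
      = (∫ t in Set.Ioc (0:ℝ) 1, f β w z t) + ∫ t in Set.Ioi (1:ℝ), f β w z t := by
    rw [← MeasureTheory.setIntegral_union (Set.Ioc_disjoint_Ioi le_rfl) measurableSet_Ioi
      hint1 hintIoi1, Set.Ioc_union_Ioi_eq_Ioi zero_le_one]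
  simp only [hsplit]
  rw [htotal]
  exact hpart1.add hpart2

lemma side_cont {β w z : ℝ} (hβ0 : 0 < β) (hβ1 : β < 1) (hw : 0 ≤ w) (hz : 0 ≤ z)
    {a : ℝ} (ha : Real.exp a ≠ w) :
    ContinuousOn (fun y : ℝ => G β w z ((a:ℂ) + (y:ℂ)*Complex.I)) (Set.uIcc (-π) π) := by
  apply (G_contOn hβ0 hβ1 hw hz).comp
  · fun_prop
  · intro y hy
    rw [Set.uIcc_of_le (by linarith [Real.pi_pos] : -π ≤ π)] at hy
    constructor
    · apply exp_ne_of_re hw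
      simpa using ha
    · simp only [Complex.add_im, Complex.ofReal_re, Complex.ofReal_im, Complex.mul_im,
        Complex.I_re, Complex.I_im]
      simp
      rw [abs_le]
      exact ⟨hy.1, hy.2⟩

lemma right_tendsto {β w z : ℝ} (hβ0 : 0 < β) (hβ1 : β < 1) (hw : 0 ≤ w) (hz : 0 ≤ z) :
    Filter.Tendsto (fun n : ℕ => ∫ y in (-π)..π, G β w z (((n:ℝ):ℂ) + (y:ℂ)*Complex.I))
      Filter.atTop (nhds (((2*π : ℝ)):ℂ)) := by
  have hS := Spos hβ0 hβ1
  have hA : 0 ≤ (w^β:ℝ) := Real.rpow_nonneg hw β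
  set C : ℕ → ℝ := fun n => (2*((w^β:ℝ)+z)/(Real.sin (π*β)*Real.exp (β*(n:ℝ)))
    + 2*w/Real.exp (n:ℝ)) * (2*π) with hC
  have hCto : Filter.Tendsto C Filter.atTop (nhds 0) := by
    have h1 : Filter.Tendsto (fun n : ℕ => Real.sin (π*β)*Real.exp (β*(n:ℝ)))
        Filter.atTop Filter.atTop := by
      apply Filter.Tendsto.const_mul_atTop hS
      apply Real.tendsto_exp_atTop.comp
      exact (tendsto_natCast_atTop_atTop (R := ℝ)).const_mul_atTop hβ0
    have h2 : Filter.Tendsto (fun n : ℕ => Real.exp (n:ℝ)) Filter.atTop Filter.atTop :=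
      Real.tendsto_exp_atTop.comp (tendsto_natCast_atTop_atTop (R := ℝ))
    have hd1 : Filter.Tendsto (fun n : ℕ => 2*((w^β:ℝ)+z)/(Real.sin (π*β)*Real.exp (β*(n:ℝ))))
        Filter.atTop (nhds 0) := Filter.Tendsto.div_atTop tendsto_const_nhds h1
    have hd2 : Filter.Tendsto (fun n : ℕ => 2*w/Real.exp (n:ℝ)) Filter.atTop (nhds 0) :=
      Filter.Tendsto.div_atTop tendsto_const_nhds h2
    have hq := (hd1.add hd2).mul_const (2*π)
    have heq : ((0:ℝ) + 0) * (2*π) = 0 := by ring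
    rw [hC, ← heq]
    exact hq
  have hev : ∀ᶠ n : ℕ in Filter.atTop, 2*w+1 ≤ Real.exp ((n:ℝ)) := by
    filter_upwards [Filter.eventually_ge_atTop (⌈2*w⌉₊)] with n hn
    calc 2*w+1 ≤ (n:ℝ)+1 := by
          have : 2*w ≤ (n:ℝ) := le_trans (Nat.le_ceil _) (by exact_mod_cast hn)
          linarith
      _ ≤ Real.exp (n:ℝ) := by linarith [Real.add_one_le_exp ((n:ℝ))]
  have hbound : ∀ᶠ n : ℕ in Filter.atTop,
      ‖(∫ y in (-π)..π, G β w z (((n:ℝ):ℂ) + (y:ℂ)*Complex.I)) - ((2*π:ℝ):ℂ)‖ ≤ C n := by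
    filter_upwards [hev] with n hn
    have hwne : Real.exp ((n:ℝ)) ≠ w := by nlinarith
    have hGint : IntervalIntegrable (fun y : ℝ => G β w z (((n:ℝ):ℂ) + (y:ℂ)*Complex.I))
        volume (-π) π := (side_cont hβ0 hβ1 hw hz hwne).intervalIntegrable
    have hsub : (∫ y in (-π)..π, G β w z (((n:ℝ):ℂ) + (y:ℂ)*Complex.I)) - ((2*π:ℝ):ℂ)
        = ∫ y in (-π)..π, (G β w z (((n:ℝ):ℂ) + (y:ℂ)*Complex.I) - 1) := by
      rw [intervalIntegral.integral_sub hGint intervalIntegrable_const,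
        intervalIntegral.integral_const]
      norm_num
      push_cast
      ring
    rw [hsub]
    have := intervalIntegral.norm_integral_le_of_norm_le_const
      (C := 2*((w^β:ℝ)+z)/(Real.sin (π*β)*Real.exp (β*(n:ℝ))) + 2*w/Real.exp (n:ℝ))
      (f := fun y : ℝ => G β w z (((n:ℝ):ℂ) + (y:ℂ)*Complex.I) - 1)
      (a := -π) (b := π) ?_
    · calc ‖_‖ ≤ _ := this
        _ ≤ C n := by
          rw [hC]
          have : |π - (-π)| = 2*π := by
            rw [_root_.abs_of_pos (by linarith [Real.pi_pos])]
            ring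
          rw [this]
    · intro y hy
      have him : |(((n:ℝ):ℂ) + (y:ℂ)*Complex.I).im| ≤ π := by
        simp only [Complex.add_im, Complex.ofReal_im, Complex.mul_im, Complex.I_im,
          Complex.ofReal_re, Complex.I_re]
        simp
        rw [abs_le]
        rw [Set.uIoc_of_le (by linarith [Real.pi_pos] : -π ≤ π)] at hy
        exact ⟨hy.1.le, hy.2⟩
      have hre : (((n:ℝ):ℂ) + (y:ℂ)*Complex.I).re = (n:ℝ) := by simp
      have hb := G_sub_one_bound hβ0 hβ1 hw hz him (by rw [hre]; exact hn)
      rw [hre] at hb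
      simpa [Complex.norm_eq_abs] using hb
  apply tendsto_sub_nhds_zero_iff.1
  apply squeeze_zero_norm' hbound hCto

lemma left_tendsto {β w z : ℝ} (hβ0 : 0 < β) (hβ1 : β < 1) (hw : 0 ≤ w) (hz : 0 ≤ z)
    (hwz : 0 < w ^ β + z) :
    Filter.Tendsto (fun n : ℕ => ∫ y in (-π)..π, G β w z (((-(n:ℝ)):ℂ) + (y:ℂ)*Complex.I))
      Filter.atTop (nhds (0:ℂ)) := by
  have hS := Spos hβ0 hβ1
  have hA : 0 ≤ (w^β:ℝ) := Real.rpow_nonneg hw β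
  have hmemim : ∀ (n : ℕ) (y : ℝ), y ∈ Set.uIoc (-π) π →
      |((((-(n:ℝ)):ℂ)) + (y:ℂ)*Complex.I).im| ≤ π := by
    intro n y hy
    rw [Set.uIoc_of_le (by linarith [Real.pi_pos] : -π ≤ π)] at hy
    simp
    rw [abs_le]
    exact ⟨hy.1.le, hy.2⟩
  rcases eq_or_lt_of_le hw with h0 | hwpos
  · -- w = 0
    have hz0 : 0 < z := by
      rw [← h0, Real.zero_rpow (ne_of_gt hβ0)] at hwz
      linarith
    set C : ℕ → ℝ := fun n => (Real.exp (β*(-(n:ℝ)))/(Real.sin (π*β)*z)) * (2*π) with hC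
    have hCto : Filter.Tendsto C Filter.atTop (nhds 0) := by
      have h1 : Filter.Tendsto (fun n : ℕ => Real.exp (β*(-(n:ℝ)))) Filter.atTop (nhds 0) := by
        apply Real.tendsto_exp_atBot.comp
        apply Filter.Tendsto.const_mul_atBot hβ0
        exact tendsto_neg_atTop_atBot.comp (tendsto_natCast_atTop_atTop (R := ℝ))
      have hq := (h1.div_const (Real.sin (π*β)*z)).mul_const (2*π)
      have heq : ((0:ℝ)/(Real.sin (π*β)*z)) * (2*π) = 0 := by ring
      rw [hC, ← heq]
      exact hq
    apply squeeze_zero_norm' _ hCto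
    filter_upwards with n
    have hwne : Real.exp (-(n:ℝ)) ≠ w := by
      rw [← h0]; exact (Real.exp_pos _).ne'
    have := intervalIntegral.norm_integral_le_of_norm_le_const
      (C := Real.exp (β*(-(n:ℝ)))/(Real.sin (π*β)*z))
      (f := fun y : ℝ => G β w z (((-(n:ℝ)):ℂ) + (y:ℂ)*Complex.I)) (a := -π) (b := π) ?_
    · calc ‖_‖ ≤ _ := this
        _ ≤ C n := by
          rw [hC]
          have h2 : |π - (-π)| = 2*π := by
            rw [_root_.abs_of_pos (by linarith [Real.pi_pos])]; ring
          rw [h2]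
    · intro y hy
      have hb := G_left_bound_zero hβ0 hβ1 h0.symm hz0 (hmemim n y hy)
      have hre : ((((-(n:ℝ)):ℂ)) + (y:ℂ)*Complex.I).re = -(n:ℝ) := by simp
      rw [hre] at hb
      simpa [Complex.norm_eq_abs] using hb
  · -- w > 0
    set C : ℕ → ℝ := fun n => ((2/(w*Real.sin (π*β))) *
      (Real.exp (-(n:ℝ)) + (w^β:ℝ) * Real.exp ((1-β)*(-(n:ℝ))))) * (2*π) with hC
    have hCto : Filter.Tendsto C Filter.atTop (nhds 0) := by
      have hneg : Filter.Tendsto (fun n : ℕ => -(n:ℝ)) Filter.atTop Filter.atBot :=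
        tendsto_neg_atTop_atBot.comp (tendsto_natCast_atTop_atTop (R := ℝ))
      have h1 : Filter.Tendsto (fun n : ℕ => Real.exp (-(n:ℝ))) Filter.atTop (nhds 0) :=
        Real.tendsto_exp_atBot.comp hneg
      have h2 : Filter.Tendsto (fun n : ℕ => Real.exp ((1-β)*(-(n:ℝ)))) Filter.atTop (nhds 0) := by
        apply Real.tendsto_exp_atBot.comp
        exact Filter.Tendsto.const_mul_atBot (by linarith) hneg
      have hsum : Filter.Tendsto (fun n : ℕ => Real.exp (-(n:ℝ))
          + (w^β:ℝ) * Real.exp ((1-β)*(-(n:ℝ)))) Filter.atTop (nhds (0 + (w^β:ℝ)*0)) :=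
        h1.add (h2.const_mul ((w^β:ℝ)))
      have hq := (hsum.const_mul (2/(w*Real.sin (π*β)))).mul_const (2*π)
      have heq : (2/(w*Real.sin (π*β)) * ((0:ℝ) + (w^β:ℝ)*0)) * (2*π) = 0 := by ring
      rw [hC, ← heq]
      exact hq
    apply squeeze_zero_norm' _ hCto
    have hev : ∀ᶠ n : ℕ in Filter.atTop, Real.exp (-(n:ℝ)) ≤ w/2 := by
      have h1 : Filter.Tendsto (fun n : ℕ => Real.exp (-(n:ℝ))) Filter.atTop (nhds 0) :=
        Real.tendsto_exp_atBot.comp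
          (tendsto_neg_atTop_atBot.comp (tendsto_natCast_atTop_atTop (R := ℝ)))
      have := h1.eventually_le_const (show (0:ℝ) < w/2 by linarith)
      exact this
    filter_upwards [hev] with n hn
    have hwne : Real.exp (-(n:ℝ)) ≠ w := by nlinarith [Real.exp_pos (-(n:ℝ))]
    have := intervalIntegral.norm_integral_le_of_norm_le_const
      (C := (2/(w*Real.sin (π*β))) *
        (Real.exp (-(n:ℝ)) + (w^β:ℝ) * Real.exp ((1-β)*(-(n:ℝ)))))
      (f := fun y : ℝ => G β w z (((-(n:ℝ)):ℂ) + (y:ℂ)*Complex.I)) (a := -π) (b := π) ?_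
    · calc ‖_‖ ≤ _ := this
        _ ≤ C n := by
          rw [hC]
          have h2 : |π - (-π)| = 2*π := by
            rw [_root_.abs_of_pos (by linarith [Real.pi_pos])]; ring
          rw [h2]
    · intro y hy
      have hre : ((((-(n:ℝ)):ℂ)) + (y:ℂ)*Complex.I).re = -(n:ℝ) := by simp
      have hb := G_left_bound_pos hβ0 hβ1 hwpos hz (hmemim n y hy) (by rw [hre]; exact hn)
      rw [hre] at hb
      simpa [Complex.norm_eq_abs] using hb


lemma edge_cont {β w z : ℝ} (hβ0 : 0 < β) (hβ1 : β < 1) (hw : 0 ≤ w) (hz : 0 ≤ z)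
    {a : ℝ} (ha : |a| = π) (n : ℕ) :
    ContinuousOn (fun x : ℝ => G β w z ((x:ℂ) + (a:ℝ)*Complex.I)) (Set.uIcc (-(n:ℝ)) (n:ℝ)) := by
  apply (G_contOn hβ0 hβ1 hw hz).comp
  · fun_prop
  · intro x _
    constructor
    · show Complex.exp ((x:ℂ) + (a:ℝ)*Complex.I) ≠ (w:ℂ)
      have hcos : Real.cos a = -1 := by
        rcases (abs_eq (le_of_lt Real.pi_pos)).1 ha with h | h
        · rw [h]; exact Real.cos_pi
        · rw [h, Real.cos_neg]; exact Real.cos_pi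
      intro hcon
      have hre : ((x:ℂ) + (a:ℝ)*Complex.I).re = x := by simp
      have him : ((x:ℂ) + (a:ℝ)*Complex.I).im = a := by simp
      have h2 := congrArg Complex.re hcon
      rw [Complex.exp_re, hre, him, hcos] at h2
      simp only [Complex.ofReal_re] at h2
      have h4 := congrArg Complex.abs hcon
      rw [Complex.abs_exp, hre, Complex.abs_ofReal, _root_.abs_of_nonneg hw] at h4
      nlinarith [Real.exp_pos x]
    · show |((x:ℂ) + (a:ℝ)*Complex.I).im| ≤ π
      rw [show ((x:ℂ) + (a:ℝ)*Complex.I).im = a by simp]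
      exact le_of_eq ha

lemma key {β w z : ℝ} (hβ0 : 0 < β) (hβ1 : β < 1) (hw : 0 ≤ w) (hz : 0 ≤ z)
    (hwz : 0 < w ^ β + z) :
    Real.sin (π*β) * ((w ^ β + z) * ∫ t in Set.Ioi (0:ℝ), f β w z t) = π := by
  have hS := Spos hβ0 hβ1
  have hπ := Real.pi_pos
  set J := ∫ t in Set.Ioi (0:ℝ), f β w z t with hJ
  -- the main sequence identity
  have hrect : ∀ᶠ n : ℕ in Filter.atTop,
      (∫ y in (-π)..π, G β w z (((n:ℝ):ℂ) + (y:ℂ)*Complex.I))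
        - (∫ y in (-π)..π, G β w z (((-(n:ℝ)):ℂ) + (y:ℂ)*Complex.I))
      = 2 * ((Real.sin (π*β) : ℝ):ℂ) * (((w^β:ℝ):ℂ) + ((z:ℝ):ℂ))
          * ((∫ x in (-(n:ℝ))..(n:ℝ), g β w z x : ℝ) : ℂ) := by
    filter_upwards [(tendsto_natCast_atTop_atTop (R := ℝ)).eventually_gt_atTop |Real.log w|]
      with n hn
    have h0 := Complex.integral_boundary_rect_eq_zero_of_differentiableOn (G β w z)
      (Complex.mk (-(n:ℝ)) (-π)) (Complex.mk (n:ℝ) π) (G_diffOn hβ0 hβ1 hw hz hn)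
    simp only [Complex.ofReal_neg, neg_mul, smul_eq_mul] at h0
    have hint_top : IntervalIntegrable (fun x : ℝ => G β w z ((x:ℂ) + ((π:ℝ):ℂ)*Complex.I))
        volume (-(n:ℝ)) (n:ℝ) :=
      (edge_cont hβ0 hβ1 hw hz (_root_.abs_of_pos hπ) n).intervalIntegrable
    have hint_bot : IntervalIntegrable (fun x : ℝ => G β w z ((x:ℂ) + ((-π:ℝ):ℂ)*Complex.I))
        volume (-(n:ℝ)) (n:ℝ) :=
      (edge_cont hβ0 hβ1 hw hz (by rw [abs_neg, _root_.abs_of_pos hπ]) n).intervalIntegrable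
    have hTB : (∫ x in (-(n:ℝ))..(n:ℝ), G β w z ((x:ℂ) + ((π:ℝ):ℂ)*Complex.I))
        - (∫ x in (-(n:ℝ))..(n:ℝ), G β w z ((x:ℂ) + ((-π:ℝ):ℂ)*Complex.I))
        = (2*Real.sin (π*β)*((w^β:ℝ)+z)*Complex.I)
            * ((∫ x in (-(n:ℝ))..(n:ℝ), g β w z x : ℝ):ℂ) := by
      rw [← intervalIntegral.integral_sub hint_top hint_bot]
      rw [intervalIntegral.integral_congr (g := fun x : ℝ =>
        (2*Real.sin (π*β)*((w^β:ℝ)+z)*Complex.I) * ((g β w z x : ℝ):ℂ))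
        (fun x _ => edge_diff hβ0 hβ1 hw hz x)]
      rw [intervalIntegral.integral_const_mul]
      congr 1
      exact intervalIntegral.integral_ofReal
    simp only [Complex.ofReal_neg, neg_mul] at hTB
    have h1 : Complex.I * ((∫ y in (-π)..π, G β w z (((n:ℝ):ℂ) + (y:ℂ)*Complex.I))
        - (∫ y in (-π)..π, G β w z (((-(n:ℝ)):ℂ) + (y:ℂ)*Complex.I)))
        = Complex.I * (2 * ((Real.sin (π*β) : ℝ):ℂ) * (((w^β:ℝ):ℂ) + ((z:ℝ):ℂ))
          * ((∫ x in (-(n:ℝ))..(n:ℝ), g β w z x : ℝ) : ℂ)) := by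
      linear_combination h0 + hTB
    exact mul_left_cancel₀ Complex.I_ne_zero h1
  -- limits
  have hlim1 : Filter.Tendsto (fun n : ℕ =>
      (∫ y in (-π)..π, G β w z (((n:ℝ):ℂ) + (y:ℂ)*Complex.I))
        - (∫ y in (-π)..π, G β w z (((-(n:ℝ)):ℂ) + (y:ℂ)*Complex.I)))
      Filter.atTop (nhds (((2*π:ℝ):ℂ))) := by
    have h6 := (right_tendsto hβ0 hβ1 hw hz).sub (left_tendsto hβ0 hβ1 hw hz hwz)
    rw [sub_zero] at h6
    exact h6
  have hlim2 : Filter.Tendsto (fun n : ℕ =>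
      2 * ((Real.sin (π*β) : ℝ):ℂ) * (((w^β:ℝ):ℂ) + ((z:ℝ):ℂ))
        * ((∫ x in (-(n:ℝ))..(n:ℝ), g β w z x : ℝ) : ℂ))
      Filter.atTop (nhds (2 * ((Real.sin (π*β) : ℝ):ℂ) * (((w^β:ℝ):ℂ) + ((z:ℝ):ℂ)) * ((J:ℝ):ℂ))) := by
    apply Filter.Tendsto.const_mul
    apply (Complex.continuous_ofReal.tendsto J).comp
    have h5 := truncated_tendsto hβ0 hβ1 hw hz hwz
    apply h5.congr
    intro n
    exact (change_of_vars hβ0 hβ1 hw hz n).symm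
  have huniq := tendsto_nhds_unique (hlim1.congr' hrect) hlim2
  have hre : (2*π : ℝ) = 2*Real.sin (π*β)*((w^β:ℝ)+z) * J := by
    exact_mod_cast huniq
  nlinarith [hre]

lemma integrand_eq {β w z : ℝ} (hβ0 : 0 < β) (hβ1 : β < 1) (hw : 0 ≤ w) (hz : 0 ≤ z)
    {s : ℝ} (hs : 0 < s) :
    1 / (s ^ β * (w + s) * (1 + s ^ (-(2*β)) * z ^ 2 + 2 * z * s ^ (-β) * Real.cos (π * β)))
      = f β w z s := by
  have hsb : 0 < s ^ β := Real.rpow_pos_of_pos hs β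
  have hs2b : 0 < s ^ (2*β) := Real.rpow_pos_of_pos hs (2*β)
  have hQ := Qpos hβ0 hβ1 hz hs
  have hws : 0 < w + s := by linarith
  have hneg2 : s ^ (-(2*β)) = (s ^ (2*β))⁻¹ := Real.rpow_neg hs.le _
  have hneg1 : s ^ (-β) = (s ^ β)⁻¹ := Real.rpow_neg hs.le _
  have hsplit : s ^ (2*β) = s ^ β * s ^ β := by
    rw [two_mul, Real.rpow_add hs]
  unfold f Q at hQ ⊢
  rw [hsplit] at hQ
  rw [hneg2, hneg1, hsplit]
  have hσ : 1 + (s^β*s^β)⁻¹*z^2 + 2*z*(s^β)⁻¹*Real.cos (π*β)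
      = (s^β*s^β + 2*z*Real.cos (π*β)*s^β + z^2)/(s^β*s^β) := by
    field_simp
    ring
  rw [hσ, div_eq_div_iff (by positivity) (by positivity)]
  field_simp

end SpectralProof

end SpectralProof

theorem spectral_fractional_power (β w z : ℝ) (hβ : β ∈ Set.Ioo (0:ℝ) 1) (hw : 0 ≤ w)
    (hz : 0 ≤ z) (h : 0 < w ^ β + z) :
    1 / (w ^ β + z) = (Real.sin (π * β) / π) *
      ∫ s in Set.Ioi (0:ℝ),
        1 / (s ^ β * (w + s) *
          (1 + s ^ (-(2*β)) * z ^ 2 + 2 * z * s ^ (-β) * Real.cos (π * β))) := by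
  obtain ⟨hβ0, hβ1⟩ := hβ
  have hS := SpectralProof.Spos hβ0 hβ1
  have hπ := Real.pi_pos
  have hI : (∫ s in Set.Ioi (0:ℝ),
      1 / (s ^ β * (w + s) *
        (1 + s ^ (-(2*β)) * z ^ 2 + 2 * z * s ^ (-β) * Real.cos (π * β))))
      = ∫ t in Set.Ioi (0:ℝ), SpectralProof.f β w z t := by
    apply MeasureTheory.setIntegral_congr_fun measurableSet_Ioi
    intro s hs
    exact SpectralProof.integrand_eq hβ0 hβ1 hw hz hs
  rw [hI]
  have hk := SpectralProof.key hβ0 hβ1 hw hz h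
  set J := ∫ t in Set.Ioi (0:ℝ), SpectralProof.f β w z t
  field_simp
  nlinarith [hk]
end

section
/- Let β ∈ (0,1), and let a, c, t, μ ≥ 0 with t > 0. Then there exist constants C, c' > 0 (depending only on β and c) such that ∫_a^∞ s^{-β} exp(-c((μ+s) t²)^{1/4}) ds ≤ C t^{2β-2} exp(-c'((μ+a) t²)^{1/4}). -/
open Real MeasureTheory

private lemma rpow_add_le_add_rpow_real {x y p : ℝ} (hx : 0 ≤ x) (hy : 0 ≤ y)
    (hp : 0 ≤ p) (hp1 : p ≤ 1) : (x + y) ^ p ≤ x ^ p + y ^ p := by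
  have h := NNReal.rpow_add_le_add_rpow x.toNNReal y.toNNReal hp hp1
  have h2 := (NNReal.coe_le_coe).2 h
  simp only [NNReal.coe_rpow, NNReal.coe_add, Real.coe_toNNReal x hx,
    Real.coe_toNNReal y hy] at h2
  exact h2

private lemma integrable_aux {β b : ℝ} (hβ0 : 0 < β) (hβ1 : β < 1) (hb : 0 < b) :
    MeasureTheory.IntegrableOn
      (fun u : ℝ => u ^ (-β) * Real.exp (-b * u ^ ((1:ℝ)/4))) (Set.Ioi 0) := by
  rw [← MeasureTheory.integrableOn_Ioi_comp_rpow_iff'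
      (fun u : ℝ => u ^ (-β) * Real.exp (-b * u ^ ((1:ℝ)/4))) (p := 4) (by norm_num)]
  have h := integrableOn_rpow_mul_exp_neg_mul_rpow (s := 3 - 4*β) (p := 1)
      (by linarith) one_pos hb
  apply h.congr_fun ?_ measurableSet_Ioi
  intro x hx
  have hx0 : (0:ℝ) < x := hx
  have h1 : (x ^ (4:ℝ)) ^ (-β) = x ^ (-(4*β)) := by
    rw [← Real.rpow_mul hx0.le]; ring_nf
  have h2 : (x ^ (4:ℝ)) ^ ((1:ℝ)/4) = x := by
    rw [← Real.rpow_mul hx0.le]; norm_num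
  simp only [smul_eq_mul, h1, h2, Real.rpow_one]
  rw [← mul_assoc, ← Real.rpow_add hx0]
  ring_nf

theorem exp_integral_estimate (β c : ℝ) (hβ : β ∈ Set.Ioo (0:ℝ) 1) (hc : 0 ≤ c) :
    ∃ C c' : ℝ, 0 < C ∧ 0 < c' ∧ ∀ a μ t : ℝ, 0 ≤ a → 0 ≤ μ → 0 < t →
      (∫ s in Set.Ioi a, s ^ (-β) * Real.exp (-c * ((μ + s) * t ^ 2) ^ ((1:ℝ)/4)))
        ≤ C * t ^ (2*β - 2) * Real.exp (-c' * ((μ + a) * t ^ 2) ^ ((1:ℝ)/4)) := by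
  obtain ⟨hβ0, hβ1⟩ := hβ
  rcases hc.eq_or_lt with hc0 | hcpos
  · -- c = 0 : the integrand is not integrable, so the integral is 0
    refine ⟨1, 1, one_pos, one_pos, fun a μ t ha hμ ht => ?_⟩
    have hint : ¬ MeasureTheory.IntegrableOn
        (fun s : ℝ => s ^ (-β) * Real.exp (-c * ((μ + s) * t ^ 2) ^ ((1:ℝ)/4)))
        (Set.Ioi a) := by
      intro h
      have h' : MeasureTheory.IntegrableOn
          (fun s : ℝ => s ^ (-β) * Real.exp (-c * ((μ + s) * t ^ 2) ^ ((1:ℝ)/4)))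
          (Set.Ioi (a+1)) := h.mono_set (Set.Ioi_subset_Ioi (by linarith))
      have h'' : MeasureTheory.IntegrableOn (fun s : ℝ => s ^ (-β)) (Set.Ioi (a+1)) := by
        apply h'.congr_fun ?_ measurableSet_Ioi
        intro x hx
        simp [← hc0]
      rw [integrableOn_Ioi_rpow_iff (by linarith)] at h''
      linarith
    rw [MeasureTheory.integral_undef hint]
    positivity
  · -- c > 0
    set I : ℝ := ∫ u in Set.Ioi (0:ℝ), u ^ (-β) * Real.exp (-(c/3) * u ^ ((1:ℝ)/4)) with hI
    have hInn : 0 ≤ I := by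
      apply MeasureTheory.setIntegral_nonneg measurableSet_Ioi
      intro x hx
      have : (0:ℝ) < x := hx
      positivity
    refine ⟨I + 1, c/3, by linarith, by linarith, fun a μ t ha hμ ht => ?_⟩
    set T : ℝ := t ^ 2 with hTdef
    have hT : 0 < T := by positivity
    set b' : ℝ := (c/3) * T ^ ((1:ℝ)/4) with hb'
    have hb'pos : 0 < b' := by positivity
    set E : ℝ := Real.exp (-(c/3) * (μ * T) ^ ((1:ℝ)/4)) *
        Real.exp (-(c/3) * (a * T) ^ ((1:ℝ)/4)) with hE
    have hEpos : 0 < E := by positivity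
    -- the dominating function
    set g : ℝ → ℝ := fun s => E * (s ^ (-β) * Real.exp (-b' * s ^ ((1:ℝ)/4))) with hg
    have hgint : MeasureTheory.IntegrableOn g (Set.Ioi 0) :=
      (integrable_aux hβ0 hβ1 hb'pos).const_mul E
    have hgnn : ∀ x ∈ Set.Ioi (0:ℝ), 0 ≤ g x := by
      intro x hx
      have : (0:ℝ) < x := hx
      simp only [hg]
      positivity
    -- pointwise bound on Ioi a
    have hptwise : ∀ s ∈ Set.Ioi a,
        s ^ (-β) * Real.exp (-c * ((μ + s) * t ^ 2) ^ ((1:ℝ)/4)) ≤ g s := by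
      intro s hs
      have has : a < s := hs
      have hs0 : 0 < s := lt_of_le_of_lt ha has
      have hq : (1:ℝ)/4 ≤ 1 := by norm_num
      have hqp : (0:ℝ) ≤ 1/4 := by norm_num
      -- compare exponents
      have key : (c/3) * (μ*T) ^ ((1:ℝ)/4) + (c/3) * (a*T) ^ ((1:ℝ)/4)
          + b' * s ^ ((1:ℝ)/4) ≤ c * ((μ + s) * T) ^ ((1:ℝ)/4) := by
        have hmuT : (μ*T) ^ ((1:ℝ)/4) = μ ^ ((1:ℝ)/4) * T ^ ((1:ℝ)/4) :=
          Real.mul_rpow hμ hT.le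
        have haT : (a*T) ^ ((1:ℝ)/4) = a ^ ((1:ℝ)/4) * T ^ ((1:ℝ)/4) :=
          Real.mul_rpow ha hT.le
        have hmsT : ((μ+s)*T) ^ ((1:ℝ)/4) = (μ+s) ^ ((1:ℝ)/4) * T ^ ((1:ℝ)/4) :=
          Real.mul_rpow (by linarith) hT.le
        have h1 : μ ^ ((1:ℝ)/4) ≤ (μ+s) ^ ((1:ℝ)/4) :=
          Real.rpow_le_rpow hμ (by linarith) hqp
        have h2 : a ^ ((1:ℝ)/4) ≤ (μ+s) ^ ((1:ℝ)/4) :=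
          Real.rpow_le_rpow ha (by linarith) hqp
        have h3 : s ^ ((1:ℝ)/4) ≤ (μ+s) ^ ((1:ℝ)/4) :=
          Real.rpow_le_rpow hs0.le (by linarith) hqp
        have hTq : 0 ≤ T ^ ((1:ℝ)/4) := Real.rpow_nonneg hT.le _
        rw [hmuT, haT, hmsT, hb']
        nlinarith [mul_le_mul_of_nonneg_right h1 hTq, mul_le_mul_of_nonneg_right h2 hTq,
          mul_le_mul_of_nonneg_right h3 hTq]
      calc s ^ (-β) * Real.exp (-c * ((μ + s) * t ^ 2) ^ ((1:ℝ)/4))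
          ≤ s ^ (-β) * (E * Real.exp (-b' * s ^ ((1:ℝ)/4))) := by
            apply mul_le_mul_of_nonneg_left _ (Real.rpow_nonneg hs0.le _)
            rw [hE, ← Real.exp_add, ← Real.exp_add]
            apply Real.exp_le_exp.2
            rw [← hTdef]
            linarith
        _ = g s := by rw [hg]; ring
    -- integral comparison
    have step1 : (∫ s in Set.Ioi a, s ^ (-β) * Real.exp (-c * ((μ + s) * t ^ 2) ^ ((1:ℝ)/4)))
        ≤ ∫ s in Set.Ioi a, g s := by
      apply MeasureTheory.integral_mono_of_nonneg
      · filter_upwards [MeasureTheory.ae_restrict_mem measurableSet_Ioi] with s hs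
        have hs0 : 0 < s := lt_of_le_of_lt ha hs
        positivity
      · exact hgint.mono_set (Set.Ioi_subset_Ioi ha)
      · filter_upwards [MeasureTheory.ae_restrict_mem measurableSet_Ioi] with s hs
        exact hptwise s hs
    have step2 : (∫ s in Set.Ioi a, g s) ≤ ∫ s in Set.Ioi 0, g s := by
      apply MeasureTheory.setIntegral_mono_set hgint
      · filter_upwards [MeasureTheory.ae_restrict_mem measurableSet_Ioi] with s hs
        exact hgnn s hs
      · exact Filter.Eventually.of_forall (Set.Ioi_subset_Ioi ha)
    -- change of variables
    have step3 : (∫ s in Set.Ioi 0, g s) = E * (T ^ β * T⁻¹ * I) := by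
      have congr1 : ∀ s ∈ Set.Ioi (0:ℝ),
          s ^ (-β) * Real.exp (-b' * s ^ ((1:ℝ)/4))
            = T ^ β * ((s*T) ^ (-β) * Real.exp (-(c/3) * (s*T) ^ ((1:ℝ)/4))) := by
        intro s hs
        have hs0 : (0:ℝ) < s := hs
        have hmul : (s*T) ^ (-β) = s ^ (-β) * T ^ (-β) := Real.mul_rpow hs0.le hT.le
        have hmul2 : (s*T) ^ ((1:ℝ)/4) = s ^ ((1:ℝ)/4) * T ^ ((1:ℝ)/4) :=
          Real.mul_rpow hs0.le hT.le
        have hexp : -(c/3) * (s ^ ((1:ℝ)/4) * T ^ ((1:ℝ)/4))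
            = -(c / 3 * T ^ ((1:ℝ)/4)) * s ^ ((1:ℝ)/4) := by ring
        have hone : T ^ β * T ^ (-β) = 1 := by
          rw [← Real.rpow_add hT]; simp
        rw [hmul, hmul2, hexp, hb']
        linear_combination
          (-(s ^ (-β) * Real.exp (-(c / 3 * T ^ ((1:ℝ)/4)) * s ^ ((1:ℝ)/4)))) * hone
      have hcv := MeasureTheory.integral_comp_mul_right_Ioi
        (fun u : ℝ => u ^ (-β) * Real.exp (-(c/3) * u ^ ((1:ℝ)/4))) 0 hT
      simp only [zero_mul, smul_eq_mul] at hcv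
      have h4 : (∫ s in Set.Ioi (0:ℝ), s ^ (-β) * Real.exp (-b' * s ^ ((1:ℝ)/4)))
          = T ^ β * (T⁻¹ * I) := by
        rw [MeasureTheory.setIntegral_congr_fun measurableSet_Ioi congr1,
          MeasureTheory.integral_const_mul, hcv, hI]
      have : (∫ s in Set.Ioi 0, g s)
          = E * ∫ s in Set.Ioi (0:ℝ), s ^ (-β) * Real.exp (-b' * s ^ ((1:ℝ)/4)) := by
        rw [hg, MeasureTheory.integral_const_mul]
      rw [this, h4]; ring
    -- power identity
    have hpow : T ^ β * T⁻¹ = t ^ (2*β - 2) := by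
      have h1 : T ^ β = t ^ (2*β) := by
        rw [hTdef, ← Real.rpow_natCast t 2, ← Real.rpow_mul ht.le]
        norm_num
      have h2 : T⁻¹ = t ^ (-(2:ℝ)) := by
        rw [hTdef, ← Real.rpow_natCast t 2, ← Real.rpow_neg ht.le]
        congr 1
      rw [h1, h2, ← Real.rpow_add ht]
      ring_nf
    -- exponential comparison on the right
    have hEbound : E ≤ Real.exp (-(c/3) * ((μ + a) * t ^ 2) ^ ((1:ℝ)/4)) := by
      rw [hE, ← Real.exp_add]
      apply Real.exp_le_exp.2
      have hsplit : ((μ + a) * T) ^ ((1:ℝ)/4) ≤ (μ*T) ^ ((1:ℝ)/4) + (a*T) ^ ((1:ℝ)/4) := by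
        have := rpow_add_le_add_rpow_real (x := μ*T) (y := a*T) (p := (1:ℝ)/4)
          (by positivity) (by positivity) (by norm_num) (by norm_num)
        rw [← add_mul] at this
        exact this
      rw [← hTdef]
      nlinarith
    calc (∫ s in Set.Ioi a, s ^ (-β) * Real.exp (-c * ((μ + s) * t ^ 2) ^ ((1:ℝ)/4)))
        ≤ E * (T ^ β * T⁻¹ * I) := by rw [← step3]; exact step1.trans step2
      _ = (T ^ β * T⁻¹) * I * E := by ring
      _ ≤ t ^ (2*β - 2) * ((I + 1) * Real.exp (-(c/3) * ((μ + a) * t ^ 2) ^ ((1:ℝ)/4))) := by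
          rw [hpow, mul_assoc]
          have htp : 0 ≤ t ^ (2*β - 2) := Real.rpow_nonneg ht.le _
          have h5 : I * E ≤ (I + 1) * Real.exp (-(c/3) * ((μ + a) * t ^ 2) ^ ((1:ℝ)/4)) := by
            apply mul_le_mul _ hEbound hEpos.le _ <;> linarith
          exact mul_le_mul_of_nonneg_left h5 htp
      _ = (I + 1) * t ^ (2*β - 2) * Real.exp (-(c/3) * ((μ + a) * t ^ 2) ^ ((1:ℝ)/4)) := by
          ring
end

section
/- Let d ≥ 1, η ∈ [0,1), and let F : [-π,π]^d → ℝ be given by F(p) = (min(|p|,1))^{k} · exp(-c(|p|^{2-η} t²)^{1/4}) for constants c > 0, k ≥ 0, t ≥ 1. Then ∫_{[-π,π]^d} F(p) dp ≤ C t^{-d-k} · ∫_{ℝ^d} (1+|q|)^k e^{-c'|q|^{(2-η)/2}} dq for some constants C, c' > 0 independent of t, and in particular ∫_{[-π,π]^d} F(p) dp ≤ C' t^{-d-k}. -/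
open Real MeasureTheory

section MSDAux

open Set

private lemma msd_rpow_exp {s b α : ℝ} (hs : -1 < s) (hb : 0 < b) (hα : 0 < α) :
    IntegrableOn (fun x : ℝ => x ^ s * Real.exp (-b * x ^ α)) (Ioi 0) := by
  have hq : -1 < (s + 1) / α - 1 := by
    have : 0 < (s + 1) / α := div_pos (by linarith) hα
    linarith
  have h1 : IntegrableOn (fun y : ℝ => y ^ ((s + 1) / α - 1) * Real.exp (-b * y)) (Ioi 0) := by
    have := integrableOn_rpow_mul_exp_neg_mul_rpow (p := 1) hq one_pos hb
    simpa [Real.rpow_one] using this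
  have h2 := (integrableOn_Ioi_comp_rpow_iff'
    (fun y : ℝ => y ^ ((s + 1) / α - 1) * Real.exp (-b * y)) hα.ne').mpr h1
  refine h2.congr_fun (fun x hx => ?_) measurableSet_Ioi
  have hx0 : (0:ℝ) < x := hx
  have h3 : (x ^ α) ^ ((s + 1) / α - 1) = x ^ (s + 1 - α) := by
    rw [← Real.rpow_mul hx0.le]
    congr 1
    field_simp
  dsimp only
  rw [smul_eq_mul, h3, ← mul_assoc, ← Real.rpow_add hx0,
    show α - 1 + (s + 1 - α) = s by ring]

private lemma msd_comp_abs {f : ℝ → ℝ} (hf : IntegrableOn f (Ioi 0)) :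
    Integrable (fun x : ℝ => f |x|) := by
  have hIoi : IntegrableOn (fun x : ℝ => f |x|) (Ioi 0) := by
    refine hf.congr_fun (fun x hx => ?_) measurableSet_Ioi
    rw [abs_of_pos hx]
  have hIic : IntegrableOn (fun x : ℝ => f |x|) (Iic 0) := by
    rw [← Measure.map_neg_eq_self (volume : Measure ℝ)]
    have m : MeasurableEmbedding fun x : ℝ => -x :=
      (Homeomorph.neg ℝ).measurableEmbedding
    rw [m.integrableOn_map_iff]
    simp_rw [Function.comp_def, abs_neg, neg_preimage, neg_Iic, neg_zero]
    exact Iff.mpr integrableOn_Ici_iff_integrableOn_Ioi hIoi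
  rw [← integrableOn_univ, ← Iic_union_Ioi (a := (0:ℝ))]
  exact hIic.union hIoi

private lemma msd_1d {b α k : ℝ} (hb : 0 < b) (hα : 0 < α) (hk : 0 ≤ k) :
    Integrable (fun x : ℝ => (1 + |x|) ^ k * Real.exp (-b * |x| ^ α)) := by
  apply msd_comp_abs (f := fun x : ℝ => (1 + x) ^ k * Real.exp (-b * x ^ α))
  set N := ⌈k⌉₊ with hN
  have hmaj : IntegrableOn (fun x : ℝ => ∑ j ∈ Finset.range (N + 1),
      (N.choose j : ℝ) * (x ^ j * Real.exp (-b * x ^ α))) (Ioi 0) := by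
    refine integrable_finset_sum _ (fun j _ => Integrable.const_mul ?_ _)
    have := msd_rpow_exp (s := (j : ℝ)) (b := b) (α := α)
      (lt_of_lt_of_le (by norm_num) (Nat.cast_nonneg j)) hb hα
    simpa [Real.rpow_natCast, IntegrableOn] using this
  have hmeas : AEStronglyMeasurable (fun x : ℝ => (1 + x) ^ k * Real.exp (-b * x ^ α))
      (volume.restrict (Ioi 0)) := by
    apply Continuous.aestronglyMeasurable ?_ |>.restrict
    apply Continuous.mul
    · exact (continuous_const.add continuous_id).rpow_const (fun x => Or.inr hk)
    · exact Real.continuous_exp.comp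
        (continuous_const.mul (continuous_id.rpow_const (fun x => Or.inr hα.le)))
  refine hmaj.mono' hmeas ?_
  rw [ae_restrict_iff' measurableSet_Ioi]
  filter_upwards with x hx
  have hx0 : (0:ℝ) < x := hx
  have h1x : (0:ℝ) < 1 + x := by linarith
  have hexp : (0:ℝ) ≤ Real.exp (-b * x ^ α) := (Real.exp_pos _).le
  rw [Real.norm_eq_abs, abs_of_nonneg (by positivity)]
  calc (1 + x) ^ k * Real.exp (-b * x ^ α)
      ≤ (1 + x) ^ (N : ℝ) * Real.exp (-b * x ^ α) := by
        exact mul_le_mul_of_nonneg_right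
          (rpow_le_rpow_of_exponent_le (by linarith) (Nat.le_ceil k)) hexp
    _ = (x + 1) ^ N * Real.exp (-b * x ^ α) := by
        rw [Real.rpow_natCast, add_comm]
    _ = (∑ j ∈ Finset.range (N + 1), x ^ j * (1:ℝ) ^ (N - j) * (N.choose j : ℝ))
          * Real.exp (-b * x ^ α) := by rw [add_pow]
    _ = ∑ j ∈ Finset.range (N + 1), (N.choose j : ℝ) * (x ^ j * Real.exp (-b * x ^ α)) := by
        rw [Finset.sum_mul]
        refine Finset.sum_congr rfl (fun j _ => ?_)
        simp only [one_pow]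
        ring

private lemma msd_one_add_sum_le_prod {ι : Type*} (s : Finset ι) (f : ι → ℝ)
    (hf : ∀ i ∈ s, 0 ≤ f i) : 1 + ∑ i ∈ s, f i ≤ ∏ i ∈ s, (1 + f i) := by
  induction s using Finset.cons_induction with
  | empty => simp
  | cons a s ha ih =>
    rw [Finset.sum_cons, Finset.prod_cons]
    have h0 : ∀ i ∈ s, 0 ≤ f i := fun i hi => hf i (Finset.mem_cons_of_mem hi)
    have h1 : 1 + ∑ i ∈ s, f i ≤ ∏ i ∈ s, (1 + f i) := ih h0
    have ha0 : 0 ≤ f a := hf a (Finset.mem_cons_self a s)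
    have hs0 : 0 ≤ ∑ i ∈ s, f i := Finset.sum_nonneg h0
    nlinarith

private lemma msd_coord_le_norm {d : ℕ} (q : EuclideanSpace ℝ (Fin d)) (i : Fin d) :
    |q i| ≤ ‖q‖ := by
  rw [EuclideanSpace.norm_eq]
  have h : |q i| ^ 2 ≤ ∑ j, ‖q j‖ ^ 2 := by
    refine Finset.single_le_sum (f := fun j => ‖q j‖ ^ 2)
      (fun j _ => by positivity) (Finset.mem_univ i) |>.trans_eq' ?_
    rw [Real.norm_eq_abs]
  calc |q i| = Real.sqrt (|q i| ^ 2) := (Real.sqrt_sq (abs_nonneg _)).symm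
    _ ≤ _ := Real.sqrt_le_sqrt h

private lemma msd_norm_le_sum {d : ℕ} (q : EuclideanSpace ℝ (Fin d)) :
    ‖q‖ ≤ ∑ i, |q i| := by
  rw [EuclideanSpace.norm_eq]
  have h : ∑ i, ‖q i‖ ^ 2 ≤ (∑ i, ‖q i‖) ^ 2 :=
    Finset.sum_sq_le_sq_sum_of_nonneg (fun i _ => norm_nonneg _)
  calc Real.sqrt (∑ i, ‖q i‖ ^ 2) ≤ Real.sqrt ((∑ i, ‖q i‖) ^ 2) := Real.sqrt_le_sqrt h
    _ = ∑ i, ‖q i‖ := Real.sqrt_sq (Finset.sum_nonneg fun i _ => norm_nonneg _)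
    _ = ∑ i, |q i| := by simp [Real.norm_eq_abs]

private lemma msd_dd {d : ℕ} (hd : 0 < d) {b α k : ℝ} (hb : 0 < b) (hα : 0 < α) (hk : 0 ≤ k) :
    Integrable (fun q : EuclideanSpace ℝ (Fin d) =>
      (1 + ‖q‖) ^ k * Real.exp (-b * ‖q‖ ^ α)) := by
  have hbd : 0 < b / d := div_pos hb (by exact_mod_cast hd)
  have hH : Integrable (fun q : EuclideanSpace ℝ (Fin d) =>
      ∏ i, ((1 + |q i|) ^ k * Real.exp (-(b / d) * |q i| ^ α))) := by
    have e := EuclideanSpace.volume_preserving_symm_measurableEquiv_toLp (Fin d)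
    rw [← MeasurePreserving.integrable_comp_emb e.symm
      (MeasurableEquiv.measurableEmbedding _)]
    have hp : Integrable (fun x : Fin d → ℝ =>
        ∏ i, ((1 + |x i|) ^ k * Real.exp (-(b / d) * |x i| ^ α))) :=
      Integrable.fintype_prod (f := fun _ (x : ℝ) =>
        (1 + |x|) ^ k * Real.exp (-(b / d) * |x| ^ α)) (fun _ => msd_1d hbd hα hk)
    simpa [Function.comp_def, MeasurableEquiv.coe_toLp,
      PiLp.toLp_apply] using hp
  have hcont : Continuous (fun q : EuclideanSpace ℝ (Fin d) =>
      (1 + ‖q‖) ^ k * Real.exp (-b * ‖q‖ ^ α)) := by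
    apply Continuous.mul
    · exact (continuous_const.add continuous_norm).rpow_const (fun q => Or.inr hk)
    · exact Real.continuous_exp.comp
        (continuous_const.mul (continuous_norm.rpow_const (fun q => Or.inr hα.le)))
  refine hH.mono' hcont.aestronglyMeasurable (Filter.Eventually.of_forall fun q => ?_)
  rw [Real.norm_eq_abs, abs_of_nonneg (by positivity)]
  have h1 : (1 + ‖q‖) ^ k ≤ ∏ i, (1 + |q i|) ^ k := by
    rw [Real.finset_prod_rpow _ _ (fun i _ => by positivity)]
    refine Real.rpow_le_rpow (by positivity) ?_ hk
    calc 1 + ‖q‖ ≤ 1 + ∑ i, |q i| := by linarith [msd_norm_le_sum q]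
      _ ≤ ∏ i, (1 + |q i|) := msd_one_add_sum_le_prod _ _ (fun i _ => abs_nonneg _)
  have h2 : Real.exp (-b * ‖q‖ ^ α) ≤ ∏ i, Real.exp (-(b / d) * |q i| ^ α) := by
    rw [← Real.exp_sum]
    apply Real.exp_le_exp.mpr
    have hsum : ∑ i, |q i| ^ α ≤ (d : ℝ) * ‖q‖ ^ α := by
      calc ∑ i : Fin d, |q i| ^ α ≤ ∑ i : Fin d, ‖q‖ ^ α := by
            refine Finset.sum_le_sum (fun i _ => ?_)
            exact Real.rpow_le_rpow (abs_nonneg _) (msd_coord_le_norm q i) hα.le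
        _ = (d : ℝ) * ‖q‖ ^ α := by simp [Finset.sum_const, mul_comm]
    have hd0 : (0:ℝ) < d := by exact_mod_cast hd
    have hms : ∑ i, -(b / d) * |q i| ^ α = -(b / d) * ∑ i, |q i| ^ α := by
      rw [Finset.mul_sum]
    rw [hms, neg_mul, neg_mul, neg_le_neg_iff]
    calc (b / d) * ∑ i, |q i| ^ α ≤ (b / d) * ((d:ℝ) * ‖q‖ ^ α) :=
          mul_le_mul_of_nonneg_left hsum hbd.le
      _ = b * ‖q‖ ^ α := by field_simp
  calc (1 + ‖q‖) ^ k * Real.exp (-b * ‖q‖ ^ α)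
      ≤ (∏ i, (1 + |q i|) ^ k) * ∏ i, Real.exp (-(b / d) * |q i| ^ α) := by
        refine mul_le_mul h1 h2 (Real.exp_pos _).le ?_
        exact Finset.prod_nonneg (fun i _ => by positivity)
    _ = ∏ i, ((1 + |q i|) ^ k * Real.exp (-(b / d) * |q i| ^ α)) := by
        rw [Finset.prod_mul_distrib]

private lemma msd_pos {d : ℕ} {b α k : ℝ} (hd : 0 < d) (hb : 0 < b) (hα : 0 < α) (hk : 0 ≤ k) :
    0 < ∫ q : EuclideanSpace ℝ (Fin d), (1 + ‖q‖) ^ k * Real.exp (-b * ‖q‖ ^ α) := by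
  have hint := msd_dd hd hb hα hk
  have hpos : ∀ q : EuclideanSpace ℝ (Fin d),
      0 < (1 + ‖q‖) ^ k * Real.exp (-b * ‖q‖ ^ α) := fun q => by positivity
  rw [integral_pos_iff_support_of_nonneg (fun q => (hpos q).le) hint]
  have h : Function.support (fun q : EuclideanSpace ℝ (Fin d) =>
      (1 + ‖q‖) ^ k * Real.exp (-b * ‖q‖ ^ α)) = univ :=
    Set.eq_univ_of_forall (fun q => (hpos q).ne')
  rw [h]
  exact isOpen_univ.measure_pos volume ⟨0, trivial⟩

end MSDAux

theorem momentum_space_decay (d : ℕ) (hd : 1 ≤ d) (η c k : ℝ)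
    (hη : η ∈ Set.Ico (0:ℝ) 1) (hc : 0 < c) (hk : 0 ≤ k) :
    ∃ C c' C' : ℝ, 0 < C ∧ 0 < c' ∧ 0 < C' ∧ ∀ t : ℝ, 1 ≤ t →
      ((∫ p in {p : EuclideanSpace ℝ (Fin d) | ∀ i, p i ∈ Set.Icc (-π) π},
          (min ‖p‖ 1) ^ k * Real.exp (-c * (‖p‖ ^ (2 - η) * t ^ 2) ^ ((1:ℝ)/4)))
        ≤ C * t ^ (-(d:ℝ) - k) *
          ∫ q : EuclideanSpace ℝ (Fin d), (1 + ‖q‖) ^ k * Real.exp (-c' * ‖q‖ ^ ((2 - η)/2))) ∧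
      (∫ p in {p : EuclideanSpace ℝ (Fin d) | ∀ i, p i ∈ Set.Icc (-π) π},
          (min ‖p‖ 1) ^ k * Real.exp (-c * (‖p‖ ^ (2 - η) * t ^ 2) ^ ((1:ℝ)/4)))
        ≤ C' * t ^ (-(d:ℝ) - k) := by
  obtain ⟨hη0, hη1⟩ := hη
  set E := EuclideanSpace ℝ (Fin d)
  set β : ℝ := (2 - η) / 4 with hβ
  have hβ0 : 0 < β := div_pos (by linarith) (by norm_num)
  have hα2 : 0 < (2 - η) / 2 := div_pos (by linarith) (by norm_num)
  have hd0 : 0 < d := hd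
  have hIpos : 0 < ∫ q : E, (1 + ‖q‖) ^ k * Real.exp (-c * ‖q‖ ^ ((2 - η)/2)) :=
    msd_pos hd0 hc hα2 hk
  set I : ℝ := ∫ q : E, (1 + ‖q‖) ^ k * Real.exp (-c * ‖q‖ ^ ((2 - η)/2)) with hIdef
  have hJint : Integrable (fun q : E => (1 + ‖q‖) ^ k * Real.exp (-c * ‖q‖ ^ β)) :=
    msd_dd hd0 hc hβ0 hk
  have hJpos : 0 < ∫ q : E, (1 + ‖q‖) ^ k * Real.exp (-c * ‖q‖ ^ β) :=
    msd_pos hd0 hc hβ0 hk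
  set J : ℝ := ∫ q : E, (1 + ‖q‖) ^ k * Real.exp (-c * ‖q‖ ^ β) with hJdef
  refine ⟨J / I, c, J, div_pos hJpos hIpos, hc, hJpos, fun t ht => ?_⟩
  have ht0 : (0:ℝ) < t := lt_of_lt_of_le one_pos ht
  set S := {p : E | ∀ i, p i ∈ Set.Icc (-π) π}
  set G : E → ℝ := fun p =>
    (min ‖p‖ 1) ^ k * Real.exp (-(c * t ^ ((1:ℝ)/2)) * ‖p‖ ^ β) with hG
  have horig : ∀ p : E,
      (min ‖p‖ 1) ^ k * Real.exp (-c * (‖p‖ ^ (2 - η) * t ^ 2) ^ ((1:ℝ)/4)) = G p := by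
    intro p
    have hnp : (0:ℝ) ≤ ‖p‖ := norm_nonneg p
    have key : (‖p‖ ^ (2 - η) * t ^ 2) ^ ((1:ℝ)/4) = t ^ ((1:ℝ)/2) * ‖p‖ ^ β := by
      rw [Real.mul_rpow (Real.rpow_nonneg hnp _) (by positivity),
        ← Real.rpow_natCast t 2, ← Real.rpow_mul ht0.le, ← Real.rpow_mul hnp]
      push_cast
      rw [show (2:ℝ) * (1/4) = 1/2 by norm_num, show (2 - η) * (1/4) = β by rw [hβ]; ring]
      ring
    rw [hG, key]
    ring_nf
  have hGnonneg : ∀ p : E, 0 ≤ G p := fun p =>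
    mul_nonneg (Real.rpow_nonneg (le_min (norm_nonneg p) zero_le_one) _) (Real.exp_pos _).le
  have hGcont : Continuous G := by
    apply Continuous.mul
    · exact (continuous_norm.min continuous_const).rpow_const (fun p => Or.inr hk)
    · exact Real.continuous_exp.comp
        (continuous_const.mul (continuous_norm.rpow_const (fun p => Or.inr hβ0.le)))
  have hGle : ∀ p : E, G p ≤ (1 + ‖p‖) ^ k * Real.exp (-c * ‖p‖ ^ β) := by
    intro p
    have hnp : (0:ℝ) ≤ ‖p‖ := norm_nonneg p
    have h1 : (min ‖p‖ 1) ^ k ≤ (1 + ‖p‖) ^ k :=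
      Real.rpow_le_rpow (le_min hnp zero_le_one)
        (le_trans (min_le_left _ _) (by linarith)) hk
    have h3 : 1 ≤ t ^ ((1:ℝ)/2) := Real.one_le_rpow ht (by norm_num)
    have h5 : 0 ≤ ‖p‖ ^ β := Real.rpow_nonneg hnp _
    have h2 : Real.exp (-(c * t ^ ((1:ℝ)/2)) * ‖p‖ ^ β) ≤ Real.exp (-c * ‖p‖ ^ β) := by
      apply Real.exp_le_exp.mpr
      have h4 : c ≤ c * t ^ ((1:ℝ)/2) := le_mul_of_one_le_right hc.le h3
      have h6 := mul_le_mul_of_nonneg_right h4 h5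
      linarith
    exact mul_le_mul h1 h2 (Real.exp_pos _).le (by positivity)
  have hGint : Integrable G :=
    hJint.mono' hGcont.aestronglyMeasurable (Filter.Eventually.of_forall fun p => by
      rw [Real.norm_eq_abs, abs_of_nonneg (hGnonneg p)]; exact hGle p)
  have step2 : (∫ p in S, G p) ≤ ∫ p, G p :=
    setIntegral_le_integral hGint (Filter.Eventually.of_forall hGnonneg)
  have hfr : Module.finrank ℝ E = d := finrank_euclideanSpace_fin
  have step3 : (∫ p, G p) = (t ^ d)⁻¹ * ∫ q : E, G (t⁻¹ • q) := by
    have h := MeasureTheory.Measure.integral_comp_smul (volume : Measure E) G t⁻¹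
    rw [hfr, inv_pow, inv_inv, abs_of_pos (pow_pos ht0 d), smul_eq_mul] at h
    rw [h]
    field_simp
  have step4p : ∀ q : E, G (t⁻¹ • q) ≤
      t ^ (-k) * ((1 + ‖q‖) ^ k * Real.exp (-c * ‖q‖ ^ β)) := by
    intro q
    have hnq : (0:ℝ) ≤ ‖q‖ := norm_nonneg q
    have hsmul : ‖t⁻¹ • q‖ = t⁻¹ * ‖q‖ := by
      rw [norm_smul, Real.norm_eq_abs, abs_of_pos (inv_pos.mpr ht0)]
    have hA : (min (t⁻¹ * ‖q‖) 1) ^ k ≤ t ^ (-k) * (1 + ‖q‖) ^ k := by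
      have h2 : (min (t⁻¹ * ‖q‖) 1) ^ k ≤ (t⁻¹ * ‖q‖) ^ k :=
        Real.rpow_le_rpow (le_min (by positivity) zero_le_one) (min_le_left _ _) hk
      have h3 : (t⁻¹ * ‖q‖) ^ k = t ^ (-k) * ‖q‖ ^ k := by
        rw [Real.mul_rpow (inv_nonneg.mpr ht0.le) hnq, Real.inv_rpow ht0.le,
          ← Real.rpow_neg ht0.le]
      have h4 : ‖q‖ ^ k ≤ (1 + ‖q‖) ^ k := Real.rpow_le_rpow hnq (by linarith) hk
      calc (min (t⁻¹ * ‖q‖) 1) ^ k ≤ (t⁻¹ * ‖q‖) ^ k := h2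
        _ = t ^ (-k) * ‖q‖ ^ k := h3
        _ ≤ t ^ (-k) * (1 + ‖q‖) ^ k :=
            mul_le_mul_of_nonneg_left h4 (Real.rpow_nonneg ht0.le _)
    have hB : Real.exp (-(c * t ^ ((1:ℝ)/2)) * (t⁻¹ * ‖q‖) ^ β) ≤
        Real.exp (-c * ‖q‖ ^ β) := by
      apply Real.exp_le_exp.mpr
      have h5 : (t⁻¹ * ‖q‖) ^ β = (t ^ β)⁻¹ * ‖q‖ ^ β := by
        rw [Real.mul_rpow (inv_nonneg.mpr ht0.le) hnq, Real.inv_rpow ht0.le]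
      have h6 : t ^ ((1:ℝ)/2) * (t ^ β)⁻¹ = t ^ ((1:ℝ)/2 - β) := by
        rw [← Real.rpow_neg ht0.le, ← Real.rpow_add ht0]
        ring_nf
      have h7 : 1 ≤ t ^ ((1:ℝ)/2 - β) := Real.one_le_rpow ht (by rw [hβ]; linarith)
      have h8 : 0 ≤ ‖q‖ ^ β := Real.rpow_nonneg hnq _
      rw [h5]
      have h9 : c * ‖q‖ ^ β ≤ c * t ^ ((1:ℝ)/2) * ((t ^ β)⁻¹ * ‖q‖ ^ β) := by
        calc c * ‖q‖ ^ β = c * (1 * ‖q‖ ^ β) := by ring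
          _ ≤ c * ((t ^ ((1:ℝ)/2) * (t ^ β)⁻¹) * ‖q‖ ^ β) :=
              mul_le_mul_of_nonneg_left (mul_le_mul_of_nonneg_right (h6 ▸ h7) h8) hc.le
          _ = c * t ^ ((1:ℝ)/2) * ((t ^ β)⁻¹ * ‖q‖ ^ β) := by ring
      linarith
    calc G (t⁻¹ • q)
        = (min (t⁻¹ * ‖q‖) 1) ^ k * Real.exp (-(c * t ^ ((1:ℝ)/2)) * (t⁻¹ * ‖q‖) ^ β) := by
          rw [hG]; simp only [hsmul]
      _ ≤ (t ^ (-k) * (1 + ‖q‖) ^ k) * Real.exp (-c * ‖q‖ ^ β) :=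
          mul_le_mul hA hB (Real.exp_pos _).le (by positivity)
      _ = t ^ (-k) * ((1 + ‖q‖) ^ k * Real.exp (-c * ‖q‖ ^ β)) := by ring
  have step4 : (∫ q : E, G (t⁻¹ • q)) ≤ t ^ (-k) * J := by
    rw [hJdef, ← integral_const_mul]
    exact integral_mono (hGint.comp_smul (inv_ne_zero ht0.ne'))
      ((hJint.const_mul _)) step4p
  have main : (∫ p in S,
      (min ‖p‖ 1) ^ k * Real.exp (-c * (‖p‖ ^ (2 - η) * t ^ 2) ^ ((1:ℝ)/4)))
      ≤ J * t ^ (-(d:ℝ) - k) := by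
    calc (∫ p in S,
        (min ‖p‖ 1) ^ k * Real.exp (-c * (‖p‖ ^ (2 - η) * t ^ 2) ^ ((1:ℝ)/4)))
        = ∫ p in S, G p := integral_congr_ae (Filter.Eventually.of_forall fun p => horig p)
      _ ≤ ∫ p, G p := step2
      _ = (t ^ d)⁻¹ * ∫ q : E, G (t⁻¹ • q) := step3
      _ ≤ (t ^ d)⁻¹ * (t ^ (-k) * J) :=
          mul_le_mul_of_nonneg_left step4 (by positivity)
      _ = J * t ^ (-(d:ℝ) - k) := by
          rw [show -(d:ℝ) - k = -(d:ℝ) + (-k) by ring, Real.rpow_add ht0,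
            Real.rpow_neg ht0.le (d:ℝ), Real.rpow_neg ht0.le k, Real.rpow_natCast]
          ring
  constructor
  · calc (∫ p in S,
        (min ‖p‖ 1) ^ k * Real.exp (-c * (‖p‖ ^ (2 - η) * t ^ 2) ^ ((1:ℝ)/4)))
        ≤ J * t ^ (-(d:ℝ) - k) := main
      _ = J / I * t ^ (-(d:ℝ) - k) * I := by field_simp
  · exact main
end
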